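/- arXiv:2406.04376 — 14 statements merged into one kernel-verified Lean document; each statement's English description precedes it below -/
import Mathlib

section
/- No ordinal metric on ω₁ satisfies the triangle inequality of metric spaces; that is, for every ordinal metric ρ : ω₁ × ω₁ → ω there exist α, β, γ ∈ ω₁ with ρ(β,γ) > ρ(α,β) + ρ(α,γ). -/
/-!
Fix the point `0`. Since `ω₁` is uncountable, some fibre `{α | ρ 0 α = n}` is infinite, and
being a subset of `ω₁` it has infinitely many elements below some `β < ω₁` (a countable
supremum of countable ordinals is countable). If `ρ` satisfied the triangle inequality, then
`ρ α β ≤ ρ 0 α + ρ 0 β = n + ρ 0 β` for all those `α`, so the ball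
`{α ≤ β : ρ α β ≤ n + ρ 0 β}` would be infinite.
-/

/-- An ordinal metric on a set `X` of ordinals: a function `ρ : X² → ω` such that
(a) `ρ α β = 0` iff `α = β`; (b) `ρ` is symmetric; (c) if `α ≤ β, γ` then
`ρ α β ≤ max (ρ α γ) (ρ β γ)`; (d) every ball `{α ≤ β : ρ α β ≤ k}` is finite. -/
def IsOrdinalMetric (X : Set Ordinal) (ρ : Ordinal → Ordinal → ℕ) : Prop :=
  (∀ α ∈ X, ∀ β ∈ X, (ρ α β = 0 ↔ α = β)) ∧
  (∀ α ∈ X, ∀ β ∈ X, ρ α β = ρ β α) ∧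
  (∀ α ∈ X, ∀ β ∈ X, ∀ γ ∈ X, α ≤ β → α ≤ γ → ρ α β ≤ max (ρ α γ) (ρ β γ)) ∧
  (∀ β ∈ X, ∀ k : ℕ, {α | α ∈ X ∧ α ≤ β ∧ ρ α β ≤ k}.Finite)

open Cardinal Ordinal

theorem Set.exists_infinite_fiber_of_not_countable {α β : Type*} [Countable β] {s : Set α}
    (hs : ¬ s.Countable) (f : α → β) : ∃ b, (s ∩ f ⁻¹' {b}).Infinite := by
  by_contra! hfin
  refine hs ((Set.countable_iUnion fun b => (hfin b).countable).mono fun a ha => ?_)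
  exact Set.mem_iUnion.mpr ⟨f a, ha, rfl⟩

theorem Ordinal.not_countable_Iio_omega_one : ¬ (Set.Iio ω₁).Countable := by
  intro hc
  have hmk := hc.le_aleph0
  rw [Cardinal.mk_Iio_ordinal, ← Cardinal.ord_aleph, Cardinal.card_ord, Cardinal.lift_le_aleph0]
    at hmk
  exact hmk.not_gt Cardinal.aleph0_lt_aleph_one

theorem Ordinal.exists_lt_omega_one_infinite_inter_Iic {s : Set Ordinal} (hs : s ⊆ Set.Iio ω₁)
    (hinf : s.Infinite) : ∃ β < ω₁, (s ∩ Set.Iic β).Infinite := by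
  let e := hinf.natEmbedding
  refine ⟨⨆ i, (e i : Ordinal), Ordinal.iSup_lt_omega_one fun i => hs (e i).2, ?_⟩
  refine Set.infinite_of_injective_forall_mem (f := fun i => (e i : Ordinal))
    (Subtype.val_injective.comp e.injective) fun i => ⟨(e i).2, ?_⟩
  exact Ordinal.le_iSup (fun i => (e i : Ordinal)) i

/-- No ordinal metric over `ω₁` satisfies the triangle inequality of metric spaces:
there are `α, β, γ < ω₁` with `ρ β γ > ρ α β + ρ α γ`. -/
theorem no_ordinal_metric_on_omega1_is_a_metric
    (ρ : Ordinal → Ordinal → ℕ)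
    (h : IsOrdinalMetric (Set.Iio (Cardinal.aleph 1).ord) ρ) :
    ∃ α ∈ Set.Iio (Cardinal.aleph 1).ord, ∃ β ∈ Set.Iio (Cardinal.aleph 1).ord,
      ∃ γ ∈ Set.Iio (Cardinal.aleph 1).ord, ρ α β + ρ α γ < ρ β γ := by
  rw [Cardinal.ord_aleph] at h ⊢
  by_contra! htri
  have h0 : (0 : Ordinal) ∈ Set.Iio ω₁ := Ordinal.omega_pos 1
  obtain ⟨n, hn⟩ := Set.exists_infinite_fiber_of_not_countable not_countable_Iio_omega_one (ρ 0)
  obtain ⟨β, hβ, hinf⟩ := exists_lt_omega_one_infinite_inter_Iic Set.inter_subset_left hn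
  refine Set.not_infinite.mpr (h.2.2.2 β hβ (n + ρ 0 β)) (hinf.mono ?_)
  rintro α ⟨⟨hα, hαn⟩, hαβ⟩
  have hαn : ρ 0 α = n := hαn
  exact ⟨hα, hαβ, hαn ▸ htri 0 h0 α hα β hβ⟩
end

section
/- Let ρ be an ordinal metric on a set X of ordinals, let F be a nonempty finite subset of X, and let k ≥ ρ^F, where ρ^F = max{ρ(α,β) : α,β ∈ F} is the diameter of F. Then the k-closure of F, (F)_k = {α ∈ X : ∃β ∈ F, α ≤ β and ρ(α,β) ≤ k}, equals {α ∈ X : α ≤ max(F) and ρ(α, max(F)) ≤ k}. -/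
/-- The `k`-closure `(F)_k = {α ∈ X : ∃ β ∈ F, α ≤ β ∧ ρ(α,β) ≤ k}`. -/
def kClosure (X : Set Ordinal) (ρ : Ordinal → Ordinal → ℕ) (F : Finset Ordinal) (k : ℕ) :
    Set Ordinal :=
  {α | α ∈ X ∧ ∃ β ∈ F, α ≤ β ∧ ρ α β ≤ k}

/-- The diameter `ρ^F = max {ρ(α,β) : α, β ∈ F}`. -/
def diam (ρ : Ordinal → Ordinal → ℕ) (F : Finset Ordinal) : ℕ :=
  F.sup fun α => F.sup fun β => ρ α β

/-! The whole `k`-closure lies in the lower `k`-ball around `γ = max F`: if `α ≤ β ∈ F` and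
`ρ(α, β) ≤ k`, then `α ≤ γ` and, since `ρ(γ, β) ≤ ρ^F ≤ k`, the ultrametric inequality at the
common lower point `α` gives `ρ(α, γ) ≤ max(ρ(α, β), ρ(γ, β)) ≤ k`. The converse inclusion is
witnessed by `γ ∈ F` itself. -/

lemma IsOrdinalMetric.le_max {X : Set Ordinal} {ρ : Ordinal → Ordinal → ℕ}
    (h : IsOrdinalMetric X ρ) {α β γ : Ordinal} (hα : α ∈ X) (hβ : β ∈ X) (hγ : γ ∈ X)
    (hαβ : α ≤ β) (hαγ : α ≤ γ) : ρ α β ≤ max (ρ α γ) (ρ β γ) :=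
  h.2.2.1 α hα β hβ γ hγ hαβ hαγ

lemma le_diam (ρ : Ordinal → Ordinal → ℕ) {F : Finset Ordinal} {α β : Ordinal}
    (hα : α ∈ F) (hβ : β ∈ F) : ρ α β ≤ diam ρ F :=
  (Finset.le_sup (f := fun β => ρ α β) hβ).trans
    (Finset.le_sup (f := fun α => F.sup fun β => ρ α β) hα)

section

variable {X : Set Ordinal} {ρ : Ordinal → Ordinal → ℕ} {F : Finset Ordinal} {k : ℕ}
  {γ : Ordinal}

lemma kClosure_subset_of_isGreatest (h : IsOrdinalMetric X ρ) (hFX : ↑F ⊆ X)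
    (hk : diam ρ F ≤ k) (hγ : IsGreatest ↑F γ) :
    kClosure X ρ F k ⊆ {α | α ∈ X ∧ α ≤ γ ∧ ρ α γ ≤ k} := by
  rintro α ⟨hαX, β, hβF, hαβ, hαβk⟩
  have hαγ : α ≤ γ := hαβ.trans (hγ.2 hβF)
  have hγβk : ρ γ β ≤ k := (le_diam ρ hγ.1 hβF).trans hk
  exact ⟨hαX, hαγ,
    (h.le_max hαX (hFX hγ.1) (hFX hβF) hαγ hαβ).trans (max_le hαβk hγβk)⟩

lemma subset_kClosure_of_mem (hγ : γ ∈ F) :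
    {α | α ∈ X ∧ α ≤ γ ∧ ρ α γ ≤ k} ⊆ kClosure X ρ F k :=
  fun _ ⟨hαX, hαγ, hαγk⟩ => ⟨hαX, γ, hγ, hαγ, hαγk⟩

end

/-- For `k ≥ ρ^F`, the `k`-closure of `F` equals
`{α ∈ X : α ≤ max F ∧ ρ(α, max F) ≤ k}`. -/
theorem kClosure_eq_ball_of_max (X : Set Ordinal) (ρ : Ordinal → Ordinal → ℕ)
    (h : IsOrdinalMetric X ρ) (F : Finset Ordinal) (hne : F.Nonempty)
    (hFX : ↑F ⊆ X) (k : ℕ) (hk : diam ρ F ≤ k) :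
    kClosure X ρ F k = {α | α ∈ X ∧ α ≤ F.max' hne ∧ ρ α (F.max' hne) ≤ k} :=
  (kClosure_subset_of_isGreatest h hFX hk (F.isGreatest_max' hne)).antisymm
    (subset_kClosure_of_mem (F.max'_mem hne))
end

section
/- Let ρ be an ordinal metric on X, let F, G be nonempty finite subsets of X with F an initial segment of G (i.e., F ⊆ G and every element of G below an element of F belongs to F). If G is closed, then F is closed. -/
/-- `F` is closed if `F = (F)_{ρ^F}`. -/
def IsClosedSet (X : Set Ordinal) (ρ : Ordinal → Ordinal → ℕ) (F : Finset Ordinal) : Prop :=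
  F.Nonempty ∧ ↑F ⊆ X ∧ kClosure X ρ F (diam ρ F) = ↑F

/-- If `F` is an initial segment of a closed set `G`, then `F` is closed. -/
theorem initialSegment_of_closed_is_closed (X : Set Ordinal) (ρ : Ordinal → Ordinal → ℕ)
    (h : IsOrdinalMetric X ρ) (F G : Finset Ordinal)
    (hFne : F.Nonempty) (hGne : G.Nonempty)
    (hsub : F ⊆ G) (hinit : ∀ b ∈ G, ∀ a ∈ F, b ≤ a → b ∈ F)
    (hG : IsClosedSet X ρ G) :
    IsClosedSet X ρ F := by
  obtain ⟨-, hGX, hGcl⟩ := hG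
  have hFX : ↑F ⊆ X := fun a ha => hGX (hsub ha)
  refine ⟨hFne, hFX, ?_⟩
  have hdiam : diam ρ F ≤ diam ρ G := by
    apply Finset.sup_le
    intro a ha
    apply Finset.sup_le
    intro b hb
    exact le_trans (Finset.le_sup (hsub hb)) (Finset.le_sup (f := fun α => G.sup fun β => ρ α β) (hsub ha))
  ext α
  constructor
  · rintro ⟨hαX, β, hβF, hle, hρ⟩
    have hαG : α ∈ G := by
      rw [← Finset.mem_coe, ← hGcl]
      exact ⟨hαX, β, hsub hβF, hle, le_trans hρ hdiam⟩
    exact hinit α hαG β hβF hle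
  · intro hα
    have hαF : α ∈ F := hα
    refine ⟨hFX hαF, α, hαF, le_refl _, ?_⟩
    have : ρ α α = 0 := (h.1 α (hFX hαF) α (hFX hαF)).mpr rfl
    omega
end

section
/- Every locally finite ordinal metric is unbounded: if ρ is a locally finite ordinal metric on X, then for every k ∈ ω and every infinite A ⊆ X, there exist α, β ∈ A with ρ(α,β) > k. -/
/-- `ρ` is locally finite if, for every `k`, the sizes of closed sets of diameter `≤ k`
are uniformly bounded. -/
def LocallyFiniteMetric (X : Set Ordinal) (ρ : Ordinal → Ordinal → ℕ) : Prop :=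
  ∀ k : ℕ, ∃ N : ℕ, ∀ F : Finset Ordinal, IsClosedSet X ρ F → diam ρ F ≤ k → F.card ≤ N

section Diam

variable {ρ : Ordinal → Ordinal → ℕ} {F G : Finset Ordinal}

theorem diam_le_iff {d : ℕ} : diam ρ F ≤ d ↔ ∀ α ∈ F, ∀ β ∈ F, ρ α β ≤ d := by
  simp only [diam, Finset.sup_le_iff]

theorem dist_le_diam {α β : Ordinal} (hα : α ∈ F) (hβ : β ∈ F) : ρ α β ≤ diam ρ F :=
  diam_le_iff.mp le_rfl α hα β hβ

theorem diam_mono (hFG : F ⊆ G) : diam ρ F ≤ diam ρ G :=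
  diam_le_iff.mpr fun _ hα _ hβ => dist_le_diam (hFG hα) (hFG hβ)

end Diam

namespace IsOrdinalMetric

variable {X : Set Ordinal} {ρ : Ordinal → Ordinal → ℕ} (h : IsOrdinalMetric X ρ)
  {F G : Finset Ordinal} {d : ℕ}
include h

theorem dist_self {α : Ordinal} (hα : α ∈ X) : ρ α α = 0 :=
  (h.1 α hα α hα).mpr rfl

theorem dist_comm {α β : Ordinal} (hα : α ∈ X) (hβ : β ∈ X) : ρ α β = ρ β α :=
  h.2.1 α hα β hβ

theorem dist_le_of_le {α β γ : Ordinal} (hα : α ∈ X) (hβ : β ∈ X) (hγ : γ ∈ X) (hαβ : α ≤ β)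
    (hαβd : ρ α β ≤ d) (hγβd : ρ γ β ≤ d) : ρ α γ ≤ d := by
  rcases le_total α γ with hαγ | hγα
  · exact (h.2.2.1 α hα γ hγ β hβ hαγ hαβ).trans (max_le hαβd hγβd)
  · rw [h.dist_comm hα hγ]
    exact (h.2.2.1 γ hγ α hα β hβ hγα (hγα.trans hαβ)).trans (max_le hγβd hαβd)

theorem subset_kClosure (hFX : ↑F ⊆ X) : ↑F ⊆ kClosure X ρ F d := fun α hα =>
  ⟨hFX hα, α, hα, le_rfl, (h.dist_self (hFX hα)).trans_le d.zero_le⟩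

theorem finite_kClosure (hFX : ↑F ⊆ X) : (kClosure X ρ F d).Finite := by
  refine (F.finite_toSet.biUnion fun β hβ => h.2.2.2 β (hFX hβ) d).subset ?_
  rintro α ⟨hαX, β, hβ, hαβ, hαβd⟩
  exact Set.mem_biUnion hβ ⟨hαX, hαβ, hαβd⟩

theorem dist_le_of_mem_kClosure_of_mem (hFX : ↑F ⊆ X) (hFd : diam ρ F ≤ d) {α γ : Ordinal}
    (hα : α ∈ kClosure X ρ F d) (hγ : γ ∈ F) : ρ α γ ≤ d := by
  obtain ⟨hαX, β, hβ, hαβ, hαβd⟩ := hα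
  exact h.dist_le_of_le hαX (hFX hβ) (hFX hγ) hαβ hαβd
    ((dist_le_diam hγ hβ).trans hFd)

theorem dist_le_of_mem_kClosure (hFX : ↑F ⊆ X) (hFd : diam ρ F ≤ d) {α γ : Ordinal}
    (hα : α ∈ kClosure X ρ F d) (hγ : γ ∈ kClosure X ρ F d) : ρ α γ ≤ d := by
  obtain ⟨hγX, β, hβ, hγβ, hγβd⟩ := hγ
  rw [h.dist_comm hα.1 hγX]
  exact h.dist_le_of_le hγX (hFX hβ) hα.1 hγβ hγβd
    (h.dist_le_of_mem_kClosure_of_mem hFX hFd hα hβ)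

theorem kClosure_subset_kClosure (hFX : ↑F ⊆ X) (hG : ↑G ⊆ kClosure X ρ F d) :
    kClosure X ρ G d ⊆ kClosure X ρ F d := by
  rintro α ⟨hαX, β', hβ', hαβ', hαβ'd⟩
  obtain ⟨hβ'X, β, hβ, hβ'β, hβ'βd⟩ := hG hβ'
  refine ⟨hαX, β, hβ, hαβ'.trans hβ'β, ?_⟩
  exact h.dist_le_of_le hαX hβ'X (hFX hβ) hαβ' hαβ'd
    ((h.dist_comm (hFX hβ) hβ'X).trans_le hβ'βd)

/-- The witness is the closure `(F)_{ρ^F}`. -/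
theorem exists_isClosedSet_superset (hF : F.Nonempty) (hFX : ↑F ⊆ X) :
    ∃ G : Finset Ordinal, F ⊆ G ∧ diam ρ G = diam ρ F ∧ IsClosedSet X ρ G := by
  set d := diam ρ F
  have hfin := h.finite_kClosure (d := d) hFX
  have hFG : F ⊆ hfin.toFinset := fun α hα => hfin.mem_toFinset.mpr (h.subset_kClosure hFX hα)
  have hGX : ↑hfin.toFinset ⊆ X := fun α hα => (hfin.mem_toFinset.mp hα).1
  have hdiam : diam ρ hfin.toFinset = d :=
    le_antisymm (diam_le_iff.mpr fun α hα γ hγ => h.dist_le_of_mem_kClosure hFX le_rfl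
      (hfin.mem_toFinset.mp hα) (hfin.mem_toFinset.mp hγ)) (diam_mono hFG)
  refine ⟨hfin.toFinset, hFG, hdiam, hF.mono hFG, hGX, ?_⟩
  rw [hdiam]
  refine Set.Subset.antisymm (fun α hα => ?_) (h.subset_kClosure hGX)
  rw [hfin.coe_toFinset]
  exact h.kClosure_subset_kClosure hFX hfin.coe_toFinset.subset hα

end IsOrdinalMetric

/-- Every locally finite ordinal metric is unbounded. -/
theorem locallyFinite_is_unbounded (X : Set Ordinal) (ρ : Ordinal → Ordinal → ℕ)
    (h : IsOrdinalMetric X ρ) (hlf : LocallyFiniteMetric X ρ) :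
    ∀ k : ℕ, ∀ A : Set Ordinal, A ⊆ X → A.Infinite →
      ∃ α ∈ A, ∃ β ∈ A, k < ρ α β := by
  intro k A hAX hA
  by_contra! hbounded
  obtain ⟨N, hN⟩ := hlf k
  obtain ⟨F, hFA, hFcard⟩ := hA.exists_subset_card_eq (N + 1)
  have hF : F.Nonempty := Finset.card_pos.mp (by omega)
  obtain ⟨G, hFG, hdiam, hG⟩ := h.exists_isClosedSet_superset hF (hFA.trans hAX)
  have hGk : diam ρ G ≤ k :=
    hdiam ▸ diam_le_iff.mpr fun α hα β hβ => hbounded α (hFA hα) β (hFA hβ)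
  have := Finset.card_le_card hFG
  have := hN G hG hGk
  omega
end

section
/- Let ρ be an unbounded ordinal metric on X and k ∈ ω. For every l ∈ ω and every infinite family A of pairwise disjoint l-element subsets of X, there is an infinite B ⊆ A such that for all distinct a, b ∈ B and all α ∈ a, β ∈ b, one has ρ(α,β) > k. -/
/-- `ρ` is unbounded if every infinite subset of `X` contains pairs of arbitrarily
large `ρ`-distance. -/
def UnboundedMetric (X : Set Ordinal) (ρ : Ordinal → Ordinal → ℕ) : Prop :=
  ∀ k : ℕ, ∀ A : Set Ordinal, A ⊆ X → A.Infinite → ∃ α ∈ A, ∃ β ∈ A, k < ρ α β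

/-! Enumerate the family as `s₀, s₁, …` and colour a pair `m < n` by the set of positions
`(i, j)` with `ρ(sₘ i, sₙ j) ≤ k`. By Ramsey's theorem some infinite subsequence is
homogeneous. If its colour contains a pair `(i, j)`, put `xₙ = sₙ i` and `yₙ = sₙ j`, so that
`ρ(xₘ, yₙ) ≤ k` whenever `m < n`. Any two `xₘ, xₙ` are then within `k` of infinitely many
`y`'s; since only finitely many points below `xₘ` are within `k` of it, one such `y` lies
above `xₘ`, and the ultrametric triangle inequality gives `ρ(xₘ, xₙ) ≤ k`. The infinite set
of the `x`'s would then contradict unboundedness, so the colour is empty. -/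

open Set Filter Function

theorem exists_strictMono_pairwise_eq {κ : Type*} [Finite κ] (c : ℕ → ℕ → κ) :
    ∃ g : ℕ → ℕ, StrictMono g ∧ ∃ q, ∀ m n, m < n → c (g m) (g n) = q := by
  let U := hyperfilter ℕ
  choose q hq using fun m =>
    (U.eventually_exists_iff (P := fun a n => c m n = a)).1 (.of_forall fun n => ⟨_, rfl⟩)
  obtain ⟨q₀, hq₀⟩ := (U.eventually_exists_iff (P := fun a m => q m = a)).1
    (.of_forall fun m => ⟨_, rfl⟩)
  obtain ⟨g, -, hg⟩ := exists_seq_of_forall_finset_exists (fun m => q m = q₀)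
      (fun m n => m < n ∧ c m n = q₀) fun s hs => by
    have : ∀ᶠ n in U, q n = q₀ ∧ ∀ m ∈ s, m < n ∧ c m n = q m :=
      hq₀.and <| (eventually_all_finset s).2 fun m _ =>
        Eventually.and (Nat.hyperfilter_le_atTop (eventually_gt_atTop m)) (hq m)
    obtain ⟨n, hn, hs'⟩ := this.exists
    exact ⟨n, hn, fun m hm => ⟨(hs' m hm).1, (hs' m hm).2.trans (hs m hm)⟩⟩
  exact ⟨g, fun m n hmn => (hg m n hmn).1, q₀, fun m n hmn => (hg m n hmn).2⟩

section OrdinalMetric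

variable {X : Set Ordinal} {ρ : Ordinal → Ordinal → ℕ}

theorem IsOrdinalMetric.le_of_forall_mem_infinite (h : IsOrdinalMetric X ρ) {k : ℕ}
    {α β : Ordinal} (hα : α ∈ X) (hβ : β ∈ X) {S : Set Ordinal} (hSX : S ⊆ X) (hS : S.Infinite)
    (hαS : ∀ γ ∈ S, ρ α γ ≤ k) (hβS : ∀ γ ∈ S, ρ β γ ≤ k) : ρ α β ≤ k := by
  obtain ⟨-, hsymm, htri, hfin⟩ := h
  wlog hαβ : α ≤ β generalizing α β
  · rw [hsymm α hα β hβ]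
    exact this hβ hα hβS hαS (le_of_not_ge hαβ)
  obtain ⟨γ, hγS, hαγ⟩ : ∃ γ ∈ S, α ≤ γ := by
    by_contra! hbelow
    refine hS ((hfin α hα k).subset fun γ hγ => ⟨hSX hγ, (hbelow γ hγ).le, ?_⟩)
    rw [hsymm γ (hSX hγ) α hα]
    exact hαS γ hγ
  exact (htri α hα β hβ γ (hSX hγS) hαβ hαγ).trans (max_le (hαS γ hγS) (hβS γ hγS))

theorem UnboundedMetric.exists_lt_dist_of_lt (hu : UnboundedMetric X ρ) (h : IsOrdinalMetric X ρ)
    (k : ℕ) {x y : ℕ → Ordinal} (hxX : ∀ n, x n ∈ X) (hyX : ∀ n, y n ∈ X)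
    (hx : Injective x) (hy : Injective y) :
    ∃ m n, m < n ∧ k < ρ (x m) (y n) := by
  by_contra! hclose
  have hx_close : ∀ m n, ρ (x m) (x n) ≤ k := fun m n =>
    h.le_of_forall_mem_infinite (hxX m) (hxX n) (S := y '' Ioi (max m n))
      (image_subset_iff.2 fun p _ => hyX p) ((Ioi_infinite _).image hy.injOn)
      (forall_mem_image.2 fun p hp => hclose m p (lt_of_le_of_lt (le_max_left m n) hp))
      (forall_mem_image.2 fun p hp => hclose n p (lt_of_le_of_lt (le_max_right m n) hp))
  obtain ⟨_, ⟨m, rfl⟩, _, ⟨n, rfl⟩, hfar⟩ :=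
    hu k (range x) (range_subset_iff.2 hxX) (infinite_range_of_injective hx)
  exact hfar.not_ge (hx_close m n)

theorem exists_strictMono_pairwise_lt_dist {ι : Type*} [Finite ι] (h : IsOrdinalMetric X ρ)
    (hu : UnboundedMetric X ρ) (k : ℕ) (v : ℕ → ι → Ordinal) (hvX : ∀ n i, v n i ∈ X)
    (hv : ∀ m n i j, v m i = v n j → m = n) :
    ∃ g : ℕ → ℕ, StrictMono g ∧
      Pairwise fun m n => ∀ i j, k < ρ (v (g m) i) (v (g n) j) := by
  obtain ⟨g, hg, q, hq⟩ :=
    exists_strictMono_pairwise_eq fun m n => {p : ι × ι | ρ (v m p.1) (v n p.2) ≤ k}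
  have hrow_inj : ∀ i, Injective fun n => v (g n) i := fun i _ _ hmn =>
    hg.injective (hv _ _ i i hmn)
  have hfar : ∀ m n, m < n → ∀ i j, k < ρ (v (g m) i) (v (g n) j) := by
    intro m n hmn i j
    by_contra! hle
    have hij : (i, j) ∈ q := hq m n hmn ▸ hle
    obtain ⟨m', n', hlt, hfar'⟩ := hu.exists_lt_dist_of_lt h k (fun n => hvX (g n) i)
      (fun n => hvX (g n) j) (hrow_inj i) (hrow_inj j)
    exact hfar'.not_ge ((hq m' n' hlt).symm ▸ hij :)
  refine ⟨g, hg, fun m n hmn i j => ?_⟩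
  rcases hmn.lt_or_gt with hlt | hlt
  · exact hfar m n hlt i j
  · rw [h.2.1 _ (hvX _ i) _ (hvX _ j)]
    exact hfar n m hlt j i

theorem exists_strictMono_pairwise_lt_dist_of_card_eq (h : IsOrdinalMetric X ρ)
    (hu : UnboundedMetric X ρ) (k l : ℕ) (s : ℕ → Finset Ordinal)
    (hcard : ∀ n, (s n).card = l) (hsX : ∀ n, ↑(s n) ⊆ X) (hdisj : Pairwise (Disjoint on s)) :
    ∃ g : ℕ → ℕ, StrictMono g ∧
      Pairwise fun m n => ∀ α ∈ s (g m), ∀ β ∈ s (g n), k < ρ α β := by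
  let v : ℕ → Fin l → Ordinal := fun n i => (s n).orderIsoOfFin (hcard n) i
  have hv_mem : ∀ n i, v n i ∈ s n := fun n i => ((s n).orderIsoOfFin (hcard n) i).2
  have hv_surj : ∀ n, ∀ α ∈ s n, ∃ i, v n i = α := fun n α hα =>
    ⟨_, congrArg Subtype.val (((s n).orderIsoOfFin (hcard n)).apply_symm_apply ⟨α, hα⟩)⟩
  obtain ⟨g, hg, hfar⟩ := exists_strictMono_pairwise_lt_dist h hu k v
    (fun n i => hsX n (hv_mem n i)) fun m n i j hij => by
      by_contra hmn
      exact Finset.disjoint_left.1 (hdisj hmn) (hv_mem m i) (hij ▸ hv_mem n j)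
  refine ⟨g, hg, fun m n hmn α hα β hβ => ?_⟩
  obtain ⟨i, rfl⟩ := hv_surj _ α hα
  obtain ⟨j, rfl⟩ := hv_surj _ β hβ
  exact hfar hmn i j

end OrdinalMetric

/-- For an unbounded ordinal metric, any infinite family of pairwise disjoint
`l`-element subsets of `X` has an infinite subfamily any two distinct members of
which are pointwise at `ρ`-distance `> k`. -/
theorem unbounded_free_subfamily (X : Set Ordinal) (ρ : Ordinal → Ordinal → ℕ)
    (h : IsOrdinalMetric X ρ) (hu : UnboundedMetric X ρ) (k : ℕ) :
    ∀ l : ℕ, ∀ A : Set (Finset Ordinal), A.Infinite →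
      (∀ a ∈ A, a.card = l) → (∀ a ∈ A, ↑a ⊆ X) →
      (∀ a ∈ A, ∀ b ∈ A, a ≠ b → Disjoint a b) →
      ∃ B ⊆ A, B.Infinite ∧
        ∀ a ∈ B, ∀ b ∈ B, a ≠ b → ∀ α ∈ a, ∀ β ∈ b, k < ρ α β := by
  intro l A hA hcard hX hdisj
  let s : ℕ → Finset Ordinal := fun n => hA.natEmbedding A n
  have hsA : ∀ n, s n ∈ A := fun n => (hA.natEmbedding A n).2
  have hs_inj : Injective s := fun m n hmn =>
    (hA.natEmbedding A).injective (Subtype.ext hmn)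
  obtain ⟨g, hg, hfar⟩ := exists_strictMono_pairwise_lt_dist_of_card_eq h hu k l s
    (fun n => hcard _ (hsA n)) (fun n => hX _ (hsA n))
    fun m n hmn => hdisj _ (hsA m) _ (hsA n) (hs_inj.ne hmn)
  refine ⟨range (s ∘ g), range_subset_iff.2 fun n => hsA (g n),
    infinite_range_of_injective (hs_inj.comp hg.injective), ?_⟩
  rintro _ ⟨m, rfl⟩ _ ⟨n, rfl⟩ hmn
  exact hfar fun hmn' => hmn (congrArg (s ∘ g) hmn')
end

section
/- Let ρ be a regular, locally finite, homogeneous ordinal metric on X. If F and G are closed nonempty finite subsets of X with the same cardinality, then they have the same diameter: ρ^F = ρ^G. -/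
/-- `F` is maximally closed: closed, and not properly contained in a closed set of the
same diameter. -/
def IsMaxClosed (X : Set Ordinal) (ρ : Ordinal → Ordinal → ℕ) (F : Finset Ordinal) : Prop :=
  IsClosedSet X ρ F ∧
    ∀ G : Finset Ordinal, IsClosedSet X ρ G → diam ρ G = diam ρ F → F ⊆ G → G = F

/-- `F` and `G` are `ρ`-isomorphic: same size, and the increasing enumerations are
`ρ`-preserving. -/
def RhoIso (ρ : Ordinal → Ordinal → ℕ) (F G : Finset Ordinal) : Prop :=
  F.card = G.card ∧ ∀ i j : ℕ, i < F.card → j < F.card →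
    ρ ((F.sort (· ≤ ·)).getD i 0) ((F.sort (· ≤ ·)).getD j 0) =
      ρ ((G.sort (· ≤ ·)).getD i 0) ((G.sort (· ≤ ·)).getD j 0)

/-- `ρ` is homogeneous: any two maximally closed sets with the same diameter are
`ρ`-isomorphic. -/
def HomogeneousMetric (X : Set Ordinal) (ρ : Ordinal → Ordinal → ℕ) : Prop :=
  ∀ F G : Finset Ordinal, IsMaxClosed X ρ F → IsMaxClosed X ρ G →
    diam ρ F = diam ρ G → RhoIso ρ F G

/-- `ρ` is regular: every maximally closed set of diameter `k ≥ 1` decomposes as a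
root-tail-tail Δ-system of at least two maximally closed sets of diameter `k - 1`. -/
def RegularMetric (X : Set Ordinal) (ρ : Ordinal → Ordinal → ℕ) : Prop :=
  ∀ k : ℕ, 1 ≤ k → ∀ F : Finset Ordinal, IsMaxClosed X ρ F → diam ρ F = k →
    ∃ j : ℕ, 2 ≤ j ∧ ∃ Fi : Fin j → Finset Ordinal, ∃ R : Finset Ordinal,
      (∀ i, IsMaxClosed X ρ (Fi i) ∧ diam ρ (Fi i) = k - 1) ∧
      ((↑F : Set Ordinal) = ⋃ i, ↑(Fi i)) ∧
      (∀ i i', i ≠ i' → Fi i ∩ Fi i' = R) ∧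
      (∀ i, R ⊆ Fi i ∧ ∀ a ∈ R, ∀ b ∈ Fi i, b ∉ R → a < b) ∧
      (∀ i i' : Fin j, i < i' → ∀ a ∈ Fi i, a ∉ R → ∀ b ∈ Fi i', b ∉ R → a < b)

lemma le_diam_s5 {ρ : Ordinal → Ordinal → ℕ} {F : Finset Ordinal} {a b : Ordinal}
    (ha : a ∈ F) (hb : b ∈ F) : ρ a b ≤ diam ρ F := by
  calc ρ a b ≤ F.sup (fun β => ρ a β) := Finset.le_sup hb
    _ ≤ F.sup (fun α => F.sup fun β => ρ α β) := Finset.le_sup (f := fun α => F.sup fun β => ρ α β) ha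

lemma diam_mono_s5 {ρ : Ordinal → Ordinal → ℕ} {A B : Finset Ordinal} (hAB : A ⊆ B) :
    diam ρ A ≤ diam ρ B := by
  apply Finset.sup_le
  intro a ha
  apply Finset.sup_le
  intro b hb
  exact le_diam_s5 (hAB ha) (hAB hb)

/-- Every closed set extends to a maximally closed set of the same diameter. -/
lemma exists_maxClosed (X : Set Ordinal) (ρ : Ordinal → Ordinal → ℕ)
    (hlf : LocallyFiniteMetric X ρ) (F : Finset Ordinal) (hF : IsClosedSet X ρ F) :
    ∃ M, IsMaxClosed X ρ M ∧ F ⊆ M ∧ diam ρ M = diam ρ F := by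
  classical
  obtain ⟨N, hN⟩ := hlf (diam ρ F)
  set P : ℕ → Prop := fun n => ∃ G : Finset Ordinal,
    (IsClosedSet X ρ G ∧ diam ρ G = diam ρ F ∧ F ⊆ G) ∧ G.card = n with hP
  have hPF : P F.card := ⟨F, ⟨hF, rfl, Finset.Subset.refl F⟩, rfl⟩
  have hFN : F.card ≤ N := hN F hF le_rfl
  obtain ⟨M, ⟨hMc, hMd, hFM⟩, hMcard⟩ : P (Nat.findGreatest P N) :=
    Nat.findGreatest_spec hFN hPF
  refine ⟨M, ⟨hMc, ?_⟩, hFM, hMd⟩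
  intro G hG hdG hMG
  have h1 : P G.card := ⟨G, ⟨hG, by rw [hdG, hMd], hFM.trans hMG⟩, rfl⟩
  have h2 : G.card ≤ N := hN G hG (by rw [hdG, hMd])
  have h3 : G.card ≤ Nat.findGreatest P N := Nat.le_findGreatest h2 h1
  exact (Finset.eq_of_subset_of_card_le hMG (by omega)).symm

/-- A closed set of diameter `k ≥ 1` strictly contains a maximally closed set of
diameter `k - 1`. -/
lemma exists_maxClosed_card_lt (X : Set Ordinal) (ρ : Ordinal → Ordinal → ℕ)
    (hreg : RegularMetric X ρ) (hlf : LocallyFiniteMetric X ρ)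
    (S : Finset Ordinal) (hS : IsClosedSet X ρ S) (k : ℕ) (hk : 1 ≤ k)
    (hdS : diam ρ S = k) :
    ∃ M', IsMaxClosed X ρ M' ∧ diam ρ M' = k - 1 ∧ M'.card < S.card := by
  classical
  obtain ⟨M, hM, hSM, hdM⟩ := exists_maxClosed X ρ hlf S hS
  rw [hdS] at hdM
  obtain ⟨j, hj2, Fi, R, hprops, hcov, hinter, hroot, htails⟩ := hreg k hk M hM hdM
  set i0 : Fin j := ⟨0, by omega⟩
  -- there is b ∈ S with b ∉ Fi i0
  have hnb : ∃ b ∈ S, b ∉ Fi i0 := by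
    by_contra hcon
    push_neg at hcon
    have hsub : S ⊆ Fi i0 := fun x hx => hcon x hx
    have := diam_mono_s5 (ρ := ρ) hsub
    rw [hdS, (hprops i0).2] at this
    omega
  obtain ⟨b, hbS, hb0⟩ := hnb
  have hbM : b ∈ M := hSM hbS
  have hbU : (b : Ordinal) ∈ ⋃ i, (↑(Fi i) : Set Ordinal) := by
    rw [← hcov]; exact hbM
  obtain ⟨i, hbFi⟩ := Set.mem_iUnion.mp hbU
  have hbFi : b ∈ Fi i := hbFi
  have hi0 : i ≠ i0 := by rintro rfl; exact hb0 hbFi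
  have hbR : b ∉ R := fun hbR => hb0 ((hroot i0).1 hbR)
  -- Fi i0 ⊆ S
  have hF0S : Fi i0 ⊆ S := by
    intro a ha
    have hab : a < b := by
      by_cases haR : a ∈ R
      · exact (hroot i).2 a haR b hbFi hbR
      · have h0lt : i0 < i := by
          have : (i : ℕ) ≠ 0 := fun hc => hi0 (Fin.ext hc)
          exact Fin.lt_def.mpr (by simp [i0]; omega)
        exact htails i0 i h0lt a ha haR b hbFi hbR
    have haM : a ∈ M := by
      have : (a : Ordinal) ∈ ⋃ i', (↑(Fi i') : Set Ordinal) :=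
        Set.mem_iUnion.mpr ⟨i0, ha⟩
      rw [← hcov] at this; exact this
    have haX : a ∈ X := hM.1.2.1 haM
    have hρ : ρ a b ≤ diam ρ S := by
      rw [hdS, ← hdM]; exact le_diam_s5 haM hbM
    have hmem : a ∈ kClosure X ρ S (diam ρ S) :=
      ⟨haX, b, hbS, le_of_lt hab, hρ⟩
    rw [hS.2.2] at hmem
    exact hmem
  have hss : Fi i0 ⊂ S := ⟨hF0S, fun hc => hb0 (hc hbS)⟩
  exact ⟨Fi i0, (hprops i0).1, (hprops i0).2, Finset.card_lt_card hss⟩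

/-- Downward chain: from a maximally closed set of diameter `k` we get maximally
closed sets of every smaller diameter, with smaller cardinality. -/
lemma maxClosed_chain (X : Set Ordinal) (ρ : Ordinal → Ordinal → ℕ)
    (hreg : RegularMetric X ρ) (hlf : LocallyFiniteMetric X ρ) :
    ∀ k : ℕ, ∀ M : Finset Ordinal, IsMaxClosed X ρ M → diam ρ M = k →
      ∀ k' ≤ k, ∃ M', IsMaxClosed X ρ M' ∧ diam ρ M' = k' ∧ M'.card ≤ M.card := by
  intro k
  induction k with
  | zero =>
    intro M hM hd k' hk'
    exact ⟨M, hM, by omega, le_rfl⟩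
  | succ n ih =>
    intro M hM hd k' hk'
    rcases eq_or_lt_of_le hk' with rfl | hlt
    · exact ⟨M, hM, hd, le_rfl⟩
    · obtain ⟨M₁, hM₁, hd₁, hc₁⟩ :=
        exists_maxClosed_card_lt X ρ hreg hlf M hM.1 (n + 1) (by omega) hd
      have hd₁' : diam ρ M₁ = n := by omega
      obtain ⟨M', hM', hd', hle⟩ := ih M₁ hM₁ hd₁' k' (by omega)
      exact ⟨M', hM', hd', by omega⟩

lemma main_aux (X : Set Ordinal) (ρ : Ordinal → Ordinal → ℕ)
    (hreg : RegularMetric X ρ) (hlf : LocallyFiniteMetric X ρ)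
    (hhom : HomogeneousMetric X ρ)
    (F G : Finset Ordinal) (hF : IsClosedSet X ρ F) (hG : IsClosedSet X ρ G)
    (hcard : F.card = G.card) (hlt : diam ρ F < diam ρ G) : False := by
  obtain ⟨M', hM', hdM', hcM'⟩ :=
    exists_maxClosed_card_lt X ρ hreg hlf G hG (diam ρ G) (by omega) rfl
  obtain ⟨M, hM, hFM, hdM⟩ := exists_maxClosed X ρ hlf F hF
  obtain ⟨M'', hM'', hd'', hle''⟩ :=
    maxClosed_chain X ρ hreg hlf (diam ρ G - 1) M' hM' hdM' (diam ρ F) (by omega)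
  have hcardMM : M.card = M''.card := (hhom M M'' hM hM'' (by rw [hdM, hd''])).1
  have hFle : F.card ≤ M.card := Finset.card_le_card hFM
  omega

/-- For a regular, locally finite, homogeneous ordinal metric, closed sets of the same
cardinality have the same diameter. -/
theorem closed_same_card_same_diam (X : Set Ordinal) (ρ : Ordinal → Ordinal → ℕ)
    (h : IsOrdinalMetric X ρ) (hreg : RegularMetric X ρ)
    (hlf : LocallyFiniteMetric X ρ) (hhom : HomogeneousMetric X ρ)
    (F G : Finset Ordinal) (hF : IsClosedSet X ρ F) (hG : IsClosedSet X ρ G)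
    (hcard : F.card = G.card) :
    diam ρ F = diam ρ G := by
  rcases lt_trichotomy (diam ρ F) (diam ρ G) with hlt | heq | hgt
  · exact absurd hlt (fun hlt => main_aux X ρ hreg hlf hhom F G hF hG hcard hlt)
  · exact heq
  · exact absurd hgt (fun hgt => main_aux X ρ hreg hlf hhom G F hG hF hcard.symm hgt)
end

section
/- Let F be a construction scheme over a set X of ordinals and let ρ_F(α,β) = min{k : ∃F ∈ F_k with α,β ∈ F}. Then ρ_F is an ordinal metric on X. -/
/-- A type `τ = ⟨m_k, n_{k+1}, r_{k+1}⟩` of a construction scheme. -/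
structure SchemeType where
  m : ℕ → ℕ
  n : ℕ → ℕ
  r : ℕ → ℕ
  m_zero : m 0 = 1
  two_le_n : ∀ k : ℕ, 2 ≤ n (k + 1)
  r_lt_m : ∀ k : ℕ, r (k + 1) < m k
  m_succ : ∀ k : ℕ, m (k + 1) = r (k + 1) + (m k - r (k + 1)) * n (k + 1)

/-- The `k`-th level of the family `𝓕`: its members of cardinality `m_k`. -/
def Level (τ : SchemeType) (𝓕 : Set (Finset Ordinal)) (k : ℕ) : Set (Finset Ordinal) :=
  {F | F ∈ 𝓕 ∧ F.card = τ.m k}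

/-- `𝓕` is a construction scheme over `X` of type `τ`: a cofinal family of nonempty
finite subsets of `X` such that members of level `k` have size `m_k`, intersections of
two level-`k` members are initial segments of both, and every level-`(k+1)` member is
the union of a root-tail-tail Δ-system of `n_{k+1}` level-`k` members whose root has
size `r_{k+1}`. -/
def IsConstructionScheme (τ : SchemeType) (X : Set Ordinal)
    (𝓕 : Set (Finset Ordinal)) : Prop :=
  (∀ F ∈ 𝓕, F.Nonempty ∧ ↑F ⊆ X ∧ ∃ k, F.card = τ.m k) ∧
  (∀ A : Finset Ordinal, ↑A ⊆ X → ∃ F ∈ 𝓕, A ⊆ F) ∧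
  (∀ k : ℕ, ∀ E ∈ Level τ 𝓕 k, ∀ F ∈ Level τ 𝓕 k,
    (∀ b ∈ E, ∀ a ∈ E ∩ F, b ≤ a → b ∈ E ∩ F) ∧
    (∀ b ∈ F, ∀ a ∈ E ∩ F, b ≤ a → b ∈ E ∩ F)) ∧
  (∀ k : ℕ, ∀ F ∈ Level τ 𝓕 (k + 1),
    ∃ Fi : Fin (τ.n (k + 1)) → Finset Ordinal, ∃ R : Finset Ordinal,
      (∀ i, Fi i ∈ Level τ 𝓕 k) ∧
      ((↑F : Set Ordinal) = ⋃ i, ↑(Fi i)) ∧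
      R.card = τ.r (k + 1) ∧
      (∀ i j, i ≠ j → Fi i ∩ Fi j = R) ∧
      (∀ i, ∀ a ∈ R, ∀ b ∈ Fi i, b ∉ R → a < b) ∧
      (∀ i j : Fin (τ.n (k + 1)), i < j →
        ∀ a ∈ Fi i, a ∉ R → ∀ b ∈ Fi j, b ∉ R → a < b))

/-- The metric induced by a construction scheme:
`ρ(α,β) = min {k : ∃ F ∈ 𝓕_k, α, β ∈ F}`. -/
noncomputable def schemeRho (τ : SchemeType) (𝓕 : Set (Finset Ordinal))
    (α β : Ordinal) : ℕ :=
  sInf {k : ℕ | ∃ F ∈ Level τ 𝓕 k, α ∈ F ∧ β ∈ F}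

-- Auxiliary lemmas

lemma SchemeType.m_strictMono (τ : SchemeType) : StrictMono τ.m := by
  apply strictMono_nat_of_lt_succ
  intro k
  have h1 := τ.r_lt_m k
  have h2 := τ.two_le_n k
  have h3 := τ.m_succ k
  have h4 : (τ.m k - τ.r (k+1)) * 2 ≤ (τ.m k - τ.r (k+1)) * τ.n (k+1) :=
    Nat.mul_le_mul_left _ h2
  omega

section Aux
variable {τ : SchemeType} {X : Set Ordinal} {𝓕 : Set (Finset Ordinal)}
  (h : IsConstructionScheme τ X 𝓕)

include h

lemma initSeg_aux : ∀ d k : ℕ, ∀ E ∈ Level τ 𝓕 k, ∀ G ∈ Level τ 𝓕 (k + d),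
    ∀ a ∈ E, a ∈ G → ∀ b ∈ E, b ≤ a → b ∈ G := by
  intro d
  induction d with
  | zero =>
    intro k E hE G hG a haE haG b hbE hba
    have := (h.2.2.1 k E hE G hG).1 b hbE a (Finset.mem_inter.mpr ⟨haE, haG⟩) hba
    exact (Finset.mem_inter.mp this).2
  | succ d ih =>
    intro k E hE G hG a haE haG b hbE hba
    obtain ⟨Fi, R, hFi, hcov, -, -, -, -⟩ := h.2.2.2 (k + d) G hG
    have haG' : a ∈ (↑G : Set Ordinal) := haG
    rw [hcov] at haG'
    obtain ⟨i, hi⟩ := Set.mem_iUnion.mp haG'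
    have hb : b ∈ Fi i := ih k E hE (Fi i) (hFi i) a haE hi b hbE hba
    have : b ∈ (↑G : Set Ordinal) := by
      rw [hcov]; exact Set.mem_iUnion.mpr ⟨i, hb⟩
    exact this

lemma initSeg {k j : ℕ} (hkj : k ≤ j) {E : Finset Ordinal} (hE : E ∈ Level τ 𝓕 k)
    {G : Finset Ordinal} (hG : G ∈ Level τ 𝓕 j)
    {a : Ordinal} (haE : a ∈ E) (haG : a ∈ G) {b : Ordinal} (hbE : b ∈ E)
    (hba : b ≤ a) : b ∈ G := by
  obtain ⟨d, rfl⟩ := Nat.exists_eq_add_of_le hkj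
  exact initSeg_aux h d k E hE G hG a haE haG b hbE hba

lemma down_one {α γ : Ordinal} {k j : ℕ} (hkj : k ≤ j)
    {E : Finset Ordinal} (hE : E ∈ Level τ 𝓕 k) (hαE : α ∈ E) (hγE : γ ∈ E)
    {G : Finset Ordinal} (hG : G ∈ Level τ 𝓕 (j + 1)) (hαG : α ∈ G) (hγG : γ ∈ G) :
    ∃ H ∈ Level τ 𝓕 j, α ∈ H ∧ γ ∈ H := by
  obtain ⟨Fi, R, hFi, hcov, -, hdisj, -, hord⟩ := h.2.2.2 j G hG
  have hnt : Nontrivial (Fin (τ.n (j + 1))) :=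
    Fin.nontrivial_iff_two_le.mpr (τ.two_le_n j)
  have hαG' : α ∈ (↑G : Set Ordinal) := hαG
  rw [hcov] at hαG'
  obtain ⟨i, hi⟩ := Set.mem_iUnion.mp hαG'
  have hγG' : γ ∈ (↑G : Set Ordinal) := hγG
  rw [hcov] at hγG'
  obtain ⟨i', hi'⟩ := Set.mem_iUnion.mp hγG'
  have hRsub : ∀ l, R ⊆ Fi l := by
    intro l
    obtain ⟨l', hl'⟩ := exists_ne l
    intro x hx
    have := hdisj l l' (Ne.symm hl')
    rw [← this] at hx
    exact (Finset.mem_inter.mp hx).1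
  by_cases hii : i = i'
  · exact ⟨Fi i, hFi i, hi, hii ▸ hi'⟩
  by_cases hαR : α ∈ R
  · exact ⟨Fi i', hFi i', hRsub i' hαR, hi'⟩
  by_cases hγR : γ ∈ R
  · exact ⟨Fi i, hFi i, hi, hRsub i hγR⟩
  exfalso
  rcases lt_or_gt_of_ne hii with hlt | hgt
  · have hαγ : α < γ := hord i i' hlt α hi hαR γ hi' hγR
    have : α ∈ Fi i' := initSeg h hkj hE (hFi i') hγE hi' hαE hαγ.le
    have : α ∈ R := by
      rw [← hdisj i i' hii]; exact Finset.mem_inter.mpr ⟨hi, this⟩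
    exact hαR this
  · have hγα : γ < α := hord i' i hgt γ hi' hγR α hi hαR
    have : γ ∈ Fi i := initSeg h hkj hE (hFi i) hαE hi hγE hγα.le
    have : γ ∈ R := by
      rw [← hdisj i' i (Ne.symm hii)]; exact Finset.mem_inter.mpr ⟨hi', this⟩
    exact hγR this

lemma pair_down_aux {α γ : Ordinal} {k : ℕ} {E : Finset Ordinal}
    (hE : E ∈ Level τ 𝓕 k) (hαE : α ∈ E) (hγE : γ ∈ E) :
    ∀ d l : ℕ, k ≤ l → ∀ G ∈ Level τ 𝓕 (l + d), α ∈ G → γ ∈ G →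
    ∃ H ∈ Level τ 𝓕 l, α ∈ H ∧ γ ∈ H := by
  intro d
  induction d with
  | zero => intro l _ G hG hα hγ; exact ⟨G, hG, hα, hγ⟩
  | succ d ih =>
    intro l hkl G hG hα hγ
    have hG' : G ∈ Level τ 𝓕 ((l + d) + 1) := hG
    obtain ⟨H, hH, hαH, hγH⟩ :=
      down_one h (le_trans hkl (Nat.le_add_right l d)) hE hαE hγE hG' hα hγ
    exact ih l hkl H hH hαH hγH

lemma pair_down {α γ : Ordinal} {k l j : ℕ} (hkl : k ≤ l) (hlj : l ≤ j)
    {E : Finset Ordinal} (hE : E ∈ Level τ 𝓕 k) (hαE : α ∈ E) (hγE : γ ∈ E)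
    {G : Finset Ordinal} (hG : G ∈ Level τ 𝓕 j) (hαG : α ∈ G) (hγG : γ ∈ G) :
    ∃ H ∈ Level τ 𝓕 l, α ∈ H ∧ γ ∈ H := by
  obtain ⟨d, rfl⟩ := Nat.exists_eq_add_of_le hlj
  exact pair_down_aux h hE hαE hγE d l hkl G hG hαG hγG

lemma point_down : ∀ j : ℕ, ∀ G ∈ Level τ 𝓕 j, ∀ α ∈ G,
    ∃ H ∈ Level τ 𝓕 0, α ∈ H := by
  intro j
  induction j with
  | zero => intro G hG α hα; exact ⟨G, hG, hα⟩
  | succ j ih =>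
    intro G hG α hα
    obtain ⟨Fi, R, hFi, hcov, -, -, -, -⟩ := h.2.2.2 j G hG
    have hα' : α ∈ (↑G : Set Ordinal) := hα
    rw [hcov] at hα'
    obtain ⟨i, hi⟩ := Set.mem_iUnion.mp hα'
    exact ih (Fi i) (hFi i) α hi

lemma witness_nonempty {α β : Ordinal} (hα : α ∈ X) (hβ : β ∈ X) :
    {k : ℕ | ∃ F ∈ Level τ 𝓕 k, α ∈ F ∧ β ∈ F}.Nonempty := by
  obtain ⟨F, hF, hsub⟩ := h.2.1 {α, β} (by
    intro x hx
    simp only [Finset.coe_insert, Finset.coe_singleton, Set.mem_insert_iff,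
      Set.mem_singleton_iff] at hx
    rcases hx with rfl | rfl <;> assumption)
  obtain ⟨-, -, k, hk⟩ := h.1 F hF
  exact ⟨k, F, ⟨hF, hk⟩, hsub (Finset.mem_insert_self _ _),
    hsub (Finset.mem_insert_of_mem (Finset.mem_singleton_self _))⟩

end Aux

/-- The function `ρ_𝓕` induced by a construction scheme is an ordinal metric. -/
theorem schemeRho_isOrdinalMetric (τ : SchemeType) (X : Set Ordinal)
    (𝓕 : Set (Finset Ordinal)) (h : IsConstructionScheme τ X 𝓕) :
    IsOrdinalMetric X (schemeRho τ 𝓕) := by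
  refine ⟨?_, ?_, ?_, ?_⟩
  · -- zero iff eq
    intro α hα β hβ
    constructor
    · intro h0
      have hne := witness_nonempty h hα hβ
      have hmem := Nat.sInf_mem hne
      rw [show sInf {k : ℕ | ∃ F ∈ Level τ 𝓕 k, α ∈ F ∧ β ∈ F}
          = schemeRho τ 𝓕 α β from rfl, h0] at hmem
      obtain ⟨F, hF, hαF, hβF⟩ := hmem
      have hcard : F.card = 1 := by rw [hF.2, τ.m_zero]
      obtain ⟨x, hx⟩ := Finset.card_eq_one.mp hcard
      rw [hx, Finset.mem_singleton] at hαF hβF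
      rw [hαF, hβF]
    · rintro rfl
      obtain ⟨k, F, hF, hαF, -⟩ := witness_nonempty h hα hα
      obtain ⟨H, hH, hαH⟩ := point_down h k F hF α hαF
      have : schemeRho τ 𝓕 α α ≤ 0 := Nat.sInf_le ⟨H, hH, hαH, hαH⟩
      omega
  · -- symmetry
    intro α _ β _
    unfold schemeRho
    congr 1
    ext k
    constructor <;> rintro ⟨F, hF, h1, h2⟩ <;> exact ⟨F, hF, h2, h1⟩
  · -- triangle
    intro α hα β hβ γ hγ hαβ hαγ
    set a := schemeRho τ 𝓕 α γ with ha
    set b := schemeRho τ 𝓕 β γ with hb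
    obtain ⟨E, hE, hαE, hγE⟩ := Nat.sInf_mem (witness_nonempty h hα hγ)
    obtain ⟨F, hF, hβF, hγF⟩ := Nat.sInf_mem (witness_nonempty h hβ hγ)
    have hE : E ∈ Level τ 𝓕 a := hE
    have hF : F ∈ Level τ 𝓕 b := hF
    have hEX : (↑E : Set Ordinal) ⊆ X := (h.1 E hE.1).2.1
    have hFX : (↑F : Set Ordinal) ⊆ X := (h.1 F hF.1).2.1
    obtain ⟨G, hG𝓕, hsub⟩ := h.2.1 (E ∪ F) (by
      rw [Finset.coe_union]; exact Set.union_subset hEX hFX)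
    obtain ⟨-, -, j, hj⟩ := h.1 G hG𝓕
    have hG : G ∈ Level τ 𝓕 j := ⟨hG𝓕, hj⟩
    have hEG : E ⊆ G := fun x hx => hsub (Finset.mem_union_left _ hx)
    have hFG : F ⊆ G := fun x hx => hsub (Finset.mem_union_right _ hx)
    have haj : a ≤ j := by
      have : τ.m a ≤ τ.m j := by
        rw [← hE.2, ← hj]; exact Finset.card_le_card hEG
      exact τ.m_strictMono.le_iff_le.mp this
    have hbj : b ≤ j := by
      have : τ.m b ≤ τ.m j := by
        rw [← hF.2, ← hj]; exact Finset.card_le_card hFG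
      exact τ.m_strictMono.le_iff_le.mp this
    set c := max a b with hc
    obtain ⟨E', hE', hαE', hγE'⟩ := pair_down h (le_max_left a b)
      (max_le haj hbj) hE hαE hγE hG (hEG hαE) (hEG hγE)
    obtain ⟨F', hF', hβF', hγF'⟩ := pair_down h (le_max_right a b)
      (max_le haj hbj) hF hβF hγF hG (hFG hβF) (hFG hγF)
    have hαF' : α ∈ F' := by
      have := (h.2.2.1 c E' hE' F' hF').1 α hαE'
        γ (Finset.mem_inter.mpr ⟨hγE', hγF'⟩) hαγ
      exact (Finset.mem_inter.mp this).2
    exact Nat.sInf_le ⟨F', hF', hαF', hβF'⟩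
  · -- finiteness
    intro β hβ k
    have hfin : ∀ j : ℕ,
        {α | α ≤ β ∧ ∃ E ∈ Level τ 𝓕 j, α ∈ E ∧ β ∈ E}.Finite := by
      intro j
      by_cases hw : ∃ E₀ ∈ Level τ 𝓕 j, β ∈ E₀
      · obtain ⟨E₀, hE₀, hβE₀⟩ := hw
        apply E₀.finite_toSet.subset
        rintro α ⟨hαβ, E, hE, hαE, hβE⟩
        have := (h.2.2.1 j E hE E₀ hE₀).1 α hαE
          β (Finset.mem_inter.mpr ⟨hβE, hβE₀⟩) hαβ
        exact (Finset.mem_inter.mp this).2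
      · apply Set.finite_empty.subset
        rintro α ⟨-, E, hE, -, hβE⟩
        exact absurd ⟨E, hE, hβE⟩ hw
    apply Set.Finite.subset ((Set.finite_Iic k).biUnion (fun j _ => hfin j))
    rintro α ⟨hαX, hαβ, hρ⟩
    have hne := witness_nonempty h hαX hβ
    obtain ⟨F, hF, hαF, hβF⟩ := Nat.sInf_mem hne
    exact Set.mem_biUnion (Set.mem_Iic.mpr hρ) ⟨hαβ, F, hF, hαF, hβF⟩
end

section
/- Let F be a construction scheme over X, ρ = ρ_F its induced ordinal metric, and k ∈ ω. Then F_k equals exactly the family of maximally closed subsets of X of diameter k with respect to ρ. -/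
namespace CSProof

variable {τ : SchemeType} {X : Set Ordinal} {𝓕 : Set (Finset Ordinal)}

lemma piece_subset {F : Finset Ordinal} {n : ℕ} {Fi : Fin n → Finset Ordinal}
    (hunion : (↑F : Set Ordinal) = ⋃ i, ↑(Fi i)) (i : Fin n) {x : Ordinal}
    (hx : x ∈ Fi i) : x ∈ F := by
  have : x ∈ (↑F : Set Ordinal) := by
    rw [hunion]; exact Set.mem_iUnion.mpr ⟨i, by exact_mod_cast hx⟩
  exact_mod_cast this

lemma mem_piece {F : Finset Ordinal} {n : ℕ} {Fi : Fin n → Finset Ordinal}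
    (hunion : (↑F : Set Ordinal) = ⋃ i, ↑(Fi i)) {x : Ordinal}
    (hx : x ∈ F) : ∃ i, x ∈ Fi i := by
  have : x ∈ (↑F : Set Ordinal) := by exact_mod_cast hx
  rw [hunion] at this
  obtain ⟨i, hi⟩ := Set.mem_iUnion.mp this
  exact ⟨i, by exact_mod_cast hi⟩

/-- Initial segment lemma: for `E` of level `j ≤ k` and `F` of level `k`,
`E ∩ F` is an initial segment of `E`. -/
lemma initSeg (h : IsConstructionScheme τ X 𝓕) :
    ∀ k j, j ≤ k → ∀ E ∈ Level τ 𝓕 j, ∀ F ∈ Level τ 𝓕 k,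
      ∀ b ∈ E, ∀ a ∈ E, a ∈ F → b ≤ a → b ∈ F := by
  intro k
  induction k with
  | zero =>
    intro j hj E hE F hF b hb a ha haF hba
    obtain rfl : j = 0 := Nat.le_zero.mp hj
    have := (h.2.2.1 0 E hE F hF).1 b hb a (Finset.mem_inter.mpr ⟨ha, haF⟩) hba
    exact (Finset.mem_inter.mp this).2
  | succ k ih =>
    intro j hj E hE F hF b hb a ha haF hba
    rcases eq_or_lt_of_le hj with rfl | hlt
    · have := (h.2.2.1 (k+1) E hE F hF).1 b hb a (Finset.mem_inter.mpr ⟨ha, haF⟩) hba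
      exact (Finset.mem_inter.mp this).2
    · obtain ⟨Fi, R, hparts, hunion, -, -, -, -⟩ := h.2.2.2 k F hF
      obtain ⟨i, hi⟩ := mem_piece hunion haF
      exact piece_subset hunion i (ih j (by omega) E hE (Fi i) (hparts i) b hb a ha hi hba)

/-- Among finitely many initial segments of `E`, one contains all others. -/
lemma exists_max_init {n : ℕ} (hn : 0 < n) (E : Finset Ordinal) (S : Fin n → Finset Ordinal)
    (hinit : ∀ i, ∀ b ∈ E, ∀ a ∈ E, a ∈ S i → b ≤ a → b ∈ S i) :
    ∃ i₀, ∀ i, E ∩ S i ⊆ E ∩ S i₀ := by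
  obtain ⟨i₀, -, hmax⟩ := Finset.exists_max_image Finset.univ (fun i => (E ∩ S i).card)
    ⟨⟨0, hn⟩, Finset.mem_univ _⟩
  refine ⟨i₀, fun i => ?_⟩
  by_cases hsub : E ∩ S i ⊆ E ∩ S i₀
  · exact hsub
  · have hsub' : E ∩ S i₀ ⊆ E ∩ S i := by
      intro b hb
      by_contra hbn
      obtain ⟨a, ha, han⟩ := Finset.not_subset.mp hsub
      rcases le_total a b with hab | hba
      · have := hinit i₀ a (Finset.mem_inter.mp ha).1 b (Finset.mem_inter.mp hb).1
          (Finset.mem_inter.mp hb).2 hab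
        exact han (Finset.mem_inter.mpr ⟨(Finset.mem_inter.mp ha).1, this⟩)
      · have := hinit i b (Finset.mem_inter.mp hb).1 a (Finset.mem_inter.mp ha).1
          (Finset.mem_inter.mp ha).2 hba
        exact hbn (Finset.mem_inter.mpr ⟨(Finset.mem_inter.mp hb).1, this⟩)
    have heq := Finset.eq_of_subset_of_card_le hsub' (hmax i (Finset.mem_univ i))
    rw [heq]

/-- Copy lemma: for `E` of level `j ≤ k` and `F` of level `k`, there is a level-`j`
set `E' ⊆ F` with `E ∩ F = E ∩ E'`. -/
lemma copy (h : IsConstructionScheme τ X 𝓕) :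
    ∀ k j, j ≤ k → ∀ E ∈ Level τ 𝓕 j, ∀ F ∈ Level τ 𝓕 k,
      ∃ E' ∈ Level τ 𝓕 j, (∀ x ∈ E', x ∈ F) ∧ E ∩ F = E ∩ E' := by
  intro k
  induction k with
  | zero =>
    intro j hj E hE F hF
    obtain rfl : j = 0 := Nat.le_zero.mp hj
    exact ⟨F, hF, fun x hx => hx, rfl⟩
  | succ k ih =>
    intro j hj E hE F hF
    rcases eq_or_lt_of_le hj with rfl | hlt
    · exact ⟨F, hF, fun x hx => hx, rfl⟩
    · have hjk : j ≤ k := by omega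
      obtain ⟨Fi, R, hparts, hunion, hRcard, hroot, hRlt, htails⟩ := h.2.2.2 k F hF
      have hn : 0 < τ.n (k+1) := by have := τ.two_le_n k; omega
      obtain ⟨i₀, hi₀⟩ := exists_max_init hn E Fi (fun i b hb a ha haS hba =>
        initSeg h k j hjk E hE (Fi i) (hparts i) b hb a ha haS hba)
      have hEF : E ∩ F = E ∩ Fi i₀ := by
        apply Finset.Subset.antisymm
        · intro x hx
          obtain ⟨hxE, hxF⟩ := Finset.mem_inter.mp hx
          obtain ⟨i, hi⟩ := mem_piece hunion hxF
          exact hi₀ i (Finset.mem_inter.mpr ⟨hxE, hi⟩)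
        · intro x hx
          obtain ⟨hxE, hxi⟩ := Finset.mem_inter.mp hx
          exact Finset.mem_inter.mpr ⟨hxE, piece_subset hunion i₀ hxi⟩
      obtain ⟨E', hE', hE'sub, hEE'⟩ := ih j hjk E hE (Fi i₀) (hparts i₀)
      exact ⟨E', hE', fun x hx => piece_subset hunion i₀ (hE'sub x hx),
        by rw [hEF, hEE']⟩

/-- A level-`j` set (`j ≤ k`) included in a level-`(k+1)` set is included in one
of the pieces of its canonical decomposition. -/
lemma subset_piece (h : IsConstructionScheme τ X 𝓕) {j k : ℕ} (hjk : j ≤ k)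
    {E : Finset Ordinal} (hE : E ∈ Level τ 𝓕 j)
    {Fi : Fin (τ.n (k+1)) → Finset Ordinal} (hparts : ∀ i, Fi i ∈ Level τ 𝓕 k)
    (hEsub : ∀ x ∈ E, ∃ i, x ∈ Fi i) :
    ∃ i₀, ∀ x ∈ E, x ∈ Fi i₀ := by
  have hn : 0 < τ.n (k+1) := by have := τ.two_le_n k; omega
  obtain ⟨i₀, hi₀⟩ := exists_max_init hn E Fi (fun i b hb a ha haS hba =>
    initSeg h k j hjk E hE (Fi i) (hparts i) b hb a ha haS hba)
  refine ⟨i₀, fun x hx => ?_⟩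
  obtain ⟨i, hi⟩ := hEsub x hx
  exact (Finset.mem_inter.mp (hi₀ i (Finset.mem_inter.mpr ⟨hx, hi⟩))).2

/-- Points in different tails of a level-`(k+1)` set are not together in any
set of level `≤ k`. -/
lemma tails_far (h : IsConstructionScheme τ X 𝓕) {k : ℕ} {F : Finset Ordinal}
    (hF : F ∈ Level τ 𝓕 (k+1))
    {Fi : Fin (τ.n (k+1)) → Finset Ordinal} {R : Finset Ordinal}
    (hparts : ∀ i, Fi i ∈ Level τ 𝓕 k)
    (hunion : (↑F : Set Ordinal) = ⋃ i, ↑(Fi i))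
    (hroot : ∀ i j, i ≠ j → Fi i ∩ Fi j = R)
    {i j : Fin (τ.n (k+1))} (hij : i ≠ j) {α β : Ordinal}
    (hα : α ∈ Fi i) (hαR : α ∉ R) (hβ : β ∈ Fi j) (hβR : β ∉ R)
    {j' : ℕ} (hj' : j' ≤ k) {E : Finset Ordinal} (hE : E ∈ Level τ 𝓕 j')
    (hαE : α ∈ E) (hβE : β ∈ E) : False := by
  obtain ⟨E', hE', hE'F, hEE'⟩ := copy h (k+1) j' (by omega) E hE F hF
  have hαF : α ∈ F := piece_subset hunion i hα
  have hβF : β ∈ F := piece_subset hunion j hβ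
  have hαE' : α ∈ E' := by
    have : α ∈ E ∩ E' := by rw [← hEE']; exact Finset.mem_inter.mpr ⟨hαE, hαF⟩
    exact (Finset.mem_inter.mp this).2
  have hβE' : β ∈ E' := by
    have : β ∈ E ∩ E' := by rw [← hEE']; exact Finset.mem_inter.mpr ⟨hβE, hβF⟩
    exact (Finset.mem_inter.mp this).2
  obtain ⟨i₀, hi₀⟩ := subset_piece h hj' hE' hparts
    (fun x hx => mem_piece hunion (hE'F x hx))
  have h1 : α ∈ Fi i₀ := hi₀ α hαE'
  have h2 : β ∈ Fi i₀ := hi₀ β hβE'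
  rcases eq_or_ne i₀ i with rfl | hne
  · rcases eq_or_ne i₀ j with rfl | hne2
    · exact hij rfl
    · refine hβR ?_
      rw [← hroot i₀ j hne2]
      exact Finset.mem_inter.mpr ⟨h2, hβ⟩
  · refine hαR ?_
    rw [← hroot i₀ i hne]
    exact Finset.mem_inter.mpr ⟨h1, hα⟩

lemma rho_le {F : Finset Ordinal} {k : ℕ} (hF : F ∈ Level τ 𝓕 k) {α β : Ordinal}
    (hα : α ∈ F) (hβ : β ∈ F) : schemeRho τ 𝓕 α β ≤ k :=
  Nat.sInf_le ⟨F, hF, hα, hβ⟩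

lemma rho_spec {α β : Ordinal} {k : ℕ} (hwit : ∃ F ∈ Level τ 𝓕 k, α ∈ F ∧ β ∈ F) :
    ∃ E ∈ Level τ 𝓕 (schemeRho τ 𝓕 α β), α ∈ E ∧ β ∈ E :=
  Nat.sInf_mem (⟨k, hwit⟩ : {k : ℕ | ∃ F ∈ Level τ 𝓕 k, α ∈ F ∧ β ∈ F}.Nonempty)

lemma rho_witness (h : IsConstructionScheme τ X 𝓕) {α β : Ordinal}
    (hα : α ∈ X) (hβ : β ∈ X) :
    ∃ E ∈ Level τ 𝓕 (schemeRho τ 𝓕 α β), α ∈ E ∧ β ∈ E := by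
  obtain ⟨F, hF, hsub⟩ := h.2.1 {α, β} (by
    intro x hx
    simp only [Finset.coe_insert, Finset.coe_singleton, Set.mem_insert_iff,
      Set.mem_singleton_iff] at hx
    rcases hx with rfl | rfl
    · exact hα
    · exact hβ)
  obtain ⟨-, -, l, hl⟩ := h.1 F hF
  exact rho_spec ⟨F, ⟨hF, hl⟩, hsub (by simp), hsub (by simp)⟩

lemma rho_le_diam {G : Finset Ordinal} {α β : Ordinal}
    {ρ : Ordinal → Ordinal → ℕ} (hα : α ∈ G) (hβ : β ∈ G) : ρ α β ≤ diam ρ G :=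
  le_trans (Finset.le_sup (f := fun β => ρ α β) hβ)
    (Finset.le_sup (f := fun α => G.sup fun β => ρ α β) hα)

lemma diam_le {G : Finset Ordinal} {k : ℕ} {ρ : Ordinal → Ordinal → ℕ}
    (H : ∀ α ∈ G, ∀ β ∈ G, ρ α β ≤ k) : diam ρ G ≤ k :=
  Finset.sup_le fun α hα => Finset.sup_le fun β hβ => H α hα β hβ

lemma root_subset {k : ℕ} {Fi : Fin (τ.n (k+1)) → Finset Ordinal} {R : Finset Ordinal}
    (hn : 2 ≤ τ.n (k+1))
    (hroot : ∀ i j, i ≠ j → Fi i ∩ Fi j = R) (i : Fin (τ.n (k+1))) : R ⊆ Fi i := by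
  obtain ⟨j, hj⟩ : ∃ j, j ≠ i := by
    rcases eq_or_ne i ⟨0, by omega⟩ with rfl | hne
    · exact ⟨⟨1, by omega⟩, Fin.ne_of_val_ne (by simp)⟩
    · exact ⟨⟨0, by omega⟩, Ne.symm hne⟩
  rw [← hroot i j (Ne.symm hj)]
  exact Finset.inter_subset_left

/-- A level-`k` set has diameter exactly `k`. -/
lemma diam_level (h : IsConstructionScheme τ X 𝓕) {k : ℕ} {F : Finset Ordinal}
    (hF : F ∈ Level τ 𝓕 k) : diam (schemeRho τ 𝓕) F = k := by
  have hle : diam (schemeRho τ 𝓕) F ≤ k :=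
    diam_le (fun α hα β hβ => rho_le hF hα hβ)
  cases k with
  | zero => omega
  | succ k =>
    obtain ⟨Fi, R, hparts, hunion, hRcard, hroot, -, -⟩ := h.2.2.2 k F hF
    have hn := τ.two_le_n k
    set i0 : Fin (τ.n (k+1)) := ⟨0, by omega⟩ with hi0def
    set i1 : Fin (τ.n (k+1)) := ⟨1, by omega⟩ with hi1def
    have h01 : i0 ≠ i1 := Fin.ne_of_val_ne (by simp [hi0def, hi1def])
    have hexist : ∀ i : Fin (τ.n (k+1)), ∃ α ∈ Fi i, α ∉ R := by
      intro i
      by_contra hc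
      push_neg at hc
      have hsub : Fi i ⊆ R := fun a ha => hc a ha
      have h1 := Finset.card_le_card hsub
      have h2 := (hparts i).2
      have h3 := τ.r_lt_m k
      omega
    obtain ⟨α, hα, hαR⟩ := hexist i0
    obtain ⟨β, hβ, hβR⟩ := hexist i1
    have hαF : α ∈ F := piece_subset hunion i0 hα
    have hβF : β ∈ F := piece_subset hunion i1 hβ
    have hρge : ¬ schemeRho τ 𝓕 α β ≤ k := by
      intro hc
      obtain ⟨E, hE, hαE, hβE⟩ := rho_spec (τ := τ) (𝓕 := 𝓕) ⟨F, hF, hαF, hβF⟩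
      exact tails_far h hF hparts hunion hroot h01 hα hαR hβ hβR hc hE hαE hβE
    have := rho_le_diam (ρ := schemeRho τ 𝓕) hαF hβF
    omega

/-- A level-`k` set is closed. -/
lemma level_closed (h : IsConstructionScheme τ X 𝓕) {k : ℕ} {F : Finset Ordinal}
    (hF : F ∈ Level τ 𝓕 k) : IsClosedSet X (schemeRho τ 𝓕) F := by
  obtain ⟨hne, hsub, -⟩ := h.1 F hF.1
  refine ⟨hne, hsub, ?_⟩
  rw [diam_level h hF]
  ext γ
  simp only [kClosure, Set.mem_setOf_eq, Finset.mem_coe]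
  constructor
  · rintro ⟨hγX, β, hβ, hγβ, hρ⟩
    obtain ⟨E, hE, hγE, hβE⟩ := rho_witness h hγX (hsub hβ)
    exact initSeg h k (schemeRho τ 𝓕 γ β) hρ E hE F hF γ hγE β hβE hβ hγβ
  · intro hγF
    exact ⟨hsub hγF, γ, hγF, le_refl _, rho_le hF hγF hγF⟩

/-- Descending: a set of small diameter inside a high-level set is inside a
level-`k` set. -/
lemma descend (h : IsConstructionScheme τ X 𝓕) :
    ∀ d k (G : Finset Ordinal), (↑G : Set Ordinal) ⊆ X →
      (∀ α ∈ G, ∀ β ∈ G, schemeRho τ 𝓕 α β ≤ k) →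
      ∀ F, F ∈ Level τ 𝓕 (k+d) → G ⊆ F → ∃ F' ∈ Level τ 𝓕 k, G ⊆ F' := by
  intro d
  induction d with
  | zero => exact fun k G _ _ F hF hGF => ⟨F, hF, hGF⟩
  | succ d ih =>
    intro k G hGX hρ F hF hGF
    have hF' : F ∈ Level τ 𝓕 ((k+d)+1) := hF
    obtain ⟨Fi, R, hparts, hunion, hRcard, hroot, -, -⟩ := h.2.2.2 (k+d) F hF'
    have hn := τ.two_le_n (k+d)
    by_cases hc : ∀ x ∈ G, x ∈ R
    · refine ih k G hGX hρ (Fi ⟨0, by omega⟩) (hparts _) (fun x hx => ?_)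
      exact root_subset hn hroot _ (hc x hx)
    · push_neg at hc
      obtain ⟨x, hxG, hxR⟩ := hc
      obtain ⟨i, hxi⟩ := mem_piece hunion (hGF hxG)
      have hGFi : G ⊆ Fi i := by
        intro y hyG
        obtain ⟨jy, hyj⟩ := mem_piece hunion (hGF hyG)
        by_cases hyR : y ∈ R
        · exact root_subset hn hroot i hyR
        · rcases eq_or_ne jy i with rfl | hne
          · exact hyj
          · exfalso
            obtain ⟨E, hE, hxE, hyE⟩ := rho_witness h (hGX hxG) (hGX hyG)
            have hρxy : schemeRho τ 𝓕 x y ≤ k + d := by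
              have := hρ x hxG y hyG; omega
            exact tails_far h hF' hparts hunion hroot (Ne.symm hne) hxi hxR hyj hyR
              hρxy hE hxE hyE
      exact ih k G hGX hρ (Fi i) (hparts i) hGFi

/-- Every finite subset of `X` of diameter `k` is contained in a level-`k` set. -/
lemma subset_level (h : IsConstructionScheme τ X 𝓕) {k : ℕ} {G : Finset Ordinal}
    (hGX : (↑G : Set Ordinal) ⊆ X) (hd : diam (schemeRho τ 𝓕) G = k) :
    ∃ F ∈ Level τ 𝓕 k, G ⊆ F := by
  obtain ⟨F, hF, hGF⟩ := h.2.1 G hGX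
  obtain ⟨-, -, l, hl⟩ := h.1 F hF
  have hFl : F ∈ Level τ 𝓕 l := ⟨hF, hl⟩
  have hkl : k ≤ l := by
    have : diam (schemeRho τ 𝓕) G ≤ l :=
      diam_le (fun α hα β hβ => rho_le hFl (hGF hα) (hGF hβ))
    omega
  have hFl' : F ∈ Level τ 𝓕 (k + (l - k)) := by rwa [Nat.add_sub_cancel' hkl]
  exact descend h (l - k) k G hGX
    (fun α hα β hβ => by
      have := rho_le_diam (ρ := schemeRho τ 𝓕) hα hβ; omega) F hFl' hGF

end CSProof

/-- The `k`-th level of a construction scheme consists exactly of the maximally closed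
sets of diameter `k` with respect to the induced metric. -/
theorem level_eq_maxClosed (τ : SchemeType) (X : Set Ordinal)
    (𝓕 : Set (Finset Ordinal)) (h : IsConstructionScheme τ X 𝓕) (k : ℕ) :
    Level τ 𝓕 k =
      {H : Finset Ordinal |
        IsMaxClosed X (schemeRho τ 𝓕) H ∧ diam (schemeRho τ 𝓕) H = k} := by
  ext H
  simp only [Set.mem_setOf_eq]
  constructor
  · intro hH
    have hdiam := CSProof.diam_level h hH
    refine ⟨⟨CSProof.level_closed h hH, ?_⟩, hdiam⟩
    intro G hG hGd hHG
    obtain ⟨F', hF', hGF'⟩ := CSProof.subset_level h hG.2.1 (by rw [hGd, hdiam])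
    have hHF' : H ⊆ F' := hHG.trans hGF'
    have heq : H = F' := Finset.eq_of_subset_of_card_le hHF' (by rw [hH.2, hF'.2])
    rw [← heq] at hGF'
    exact Finset.Subset.antisymm hGF' hHG
  · rintro ⟨⟨hcl, hmax⟩, hdiam⟩
    obtain ⟨F, hF, hHF⟩ := CSProof.subset_level h hcl.2.1 hdiam
    have hFH := hmax F (CSProof.level_closed h hF)
      (by rw [CSProof.diam_level h hF, hdiam]) hHF
    rw [← hFH]
    exact hF
end

section
/- Let F be a construction scheme over X with induced metric ρ. If ξ < α < β are in X and ρ(ξ,β) < ρ(α,β), then ρ(ξ,α) < ρ(α,β). -/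
lemma scheme_descend (τ : SchemeType) (X : Set Ordinal) (𝓕 : Set (Finset Ordinal))
    (h : IsConstructionScheme τ X 𝓕) :
    ∀ l k : ℕ, k ≤ l → ∀ E ∈ Level τ 𝓕 l, ∀ x ∈ E,
      ∃ F ∈ Level τ 𝓕 k, x ∈ F ∧ F ⊆ E := by
  intro l
  induction l with
  | zero =>
    intro k hk E hE x hx
    exact ⟨E, by rwa [Nat.le_zero.mp hk], hx, subset_rfl⟩
  | succ l ih =>
    intro k hk E hE x hx
    rcases eq_or_lt_of_le hk with rfl | hk'
    · exact ⟨E, hE, hx, subset_rfl⟩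
    obtain ⟨Fi, R, hFi, hcover, -, -, -, -⟩ := h.2.2.2 l E hE
    have hxU : (x : Ordinal) ∈ ⋃ i, (↑(Fi i) : Set Ordinal) := by
      rw [← hcover]; exact_mod_cast hx
    obtain ⟨i, hi⟩ := Set.mem_iUnion.mp hxU
    have hsubE : Fi i ⊆ E := by
      intro y hy
      have : (y : Ordinal) ∈ (↑E : Set Ordinal) := by
        rw [hcover]; exact Set.mem_iUnion.mpr ⟨i, hy⟩
      exact_mod_cast this
    obtain ⟨F, hF, hxF, hsub⟩ := ih k (Nat.lt_succ_iff.mp hk') (Fi i) (hFi i) x hi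
    exact ⟨F, hF, hxF, hsub.trans hsubE⟩


lemma schemeRho_set_nonempty (τ : SchemeType) (X : Set Ordinal)
    (𝓕 : Set (Finset Ordinal)) (h : IsConstructionScheme τ X 𝓕)
    (α β : Ordinal) (hα : α ∈ X) (hβ : β ∈ X) :
    {k : ℕ | ∃ F ∈ Level τ 𝓕 k, α ∈ F ∧ β ∈ F}.Nonempty := by
  have hsub : (↑({α, β} : Finset Ordinal) : Set Ordinal) ⊆ X := by
    intro x hx
    simp only [Finset.coe_insert, Finset.coe_singleton, Set.mem_insert_iff,
      Set.mem_singleton_iff] at hx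
    rcases hx with rfl | rfl <;> assumption
  obtain ⟨F, hF, hsubF⟩ := h.2.1 _ hsub
  obtain ⟨-, -, k, hk⟩ := h.1 F hF
  exact ⟨k, F, ⟨hF, hk⟩, hsubF (by simp), hsubF (by simp)⟩

/-- If `ξ < α < β` and `ρ(ξ,β) < ρ(α,β)`, then `ρ(ξ,α) < ρ(α,β)`. -/
theorem schemeRho_lt_of_lt (τ : SchemeType) (X : Set Ordinal)
    (𝓕 : Set (Finset Ordinal)) (h : IsConstructionScheme τ X 𝓕)
    (ξ α β : Ordinal) (hξ : ξ ∈ X) (hα : α ∈ X) (hβ : β ∈ X)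
    (h1 : ξ < α) (h2 : α < β)
    (hlt : schemeRho τ 𝓕 ξ β < schemeRho τ 𝓕 α β) :
    schemeRho τ 𝓕 ξ α < schemeRho τ 𝓕 α β := by
  obtain ⟨E, hE, hαE, hβE⟩ :=
    Nat.sInf_mem (schemeRho_set_nonempty τ X 𝓕 h α β hα hβ)
  obtain ⟨F, hF, hξF, hβF⟩ :=
    Nat.sInf_mem (schemeRho_set_nonempty τ X 𝓕 h ξ β hξ hβ)
  obtain ⟨l', hl'⟩ : ∃ l', schemeRho τ 𝓕 α β = l' + 1 :=
    ⟨schemeRho τ 𝓕 α β - 1, (Nat.succ_pred_eq_of_pos (by omega)).symm⟩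
  have hl2 : sInf {k : ℕ | ∃ F ∈ Level τ 𝓕 k, α ∈ F ∧ β ∈ F} = l' + 1 := hl'
  rw [hl2] at hE
  rw [hl']
  -- no level-l' member contains both α and β
  have hkey : ∀ G ∈ Level τ 𝓕 l', ¬ (α ∈ G ∧ β ∈ G) := by
    rintro G hG ⟨hαG, hβG⟩
    have : schemeRho τ 𝓕 α β ≤ l' := Nat.sInf_le ⟨G, hG, hαG, hβG⟩
    omega
  -- decompose E
  obtain ⟨Fi, R, hFi, hcover, -, hroot, hRlt, htail⟩ := h.2.2.2 l' E hE
  have hmemFi : ∀ x : Ordinal, x ∈ E → ∃ i, x ∈ Fi i := by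
    intro x hx
    have : (x : Ordinal) ∈ ⋃ i, (↑(Fi i) : Set Ordinal) := by
      rw [← hcover]; exact_mod_cast hx
    obtain ⟨i, hi⟩ := Set.mem_iUnion.mp this
    exact ⟨i, hi⟩
  obtain ⟨i0, hi0⟩ := hmemFi α hαE
  obtain ⟨j0, hj0⟩ := hmemFi β hβE
  -- α ∉ R, β ∉ R, i0 ≠ j0
  have hRsub : ∀ i, R ⊆ Fi i := by
    intro i
    have : Nontrivial (Fin (τ.n (l' + 1))) :=
      Fin.nontrivial_iff_two_le.mpr (τ.two_le_n l')
    obtain ⟨j, hj⟩ := exists_ne i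
    rw [← hroot i j (Ne.symm hj)]
    exact Finset.inter_subset_left
  have hβR : β ∉ R := fun hβR => hkey (Fi i0) (hFi i0) ⟨hi0, hRsub i0 hβR⟩
  have hαR : α ∉ R := fun hαR => hkey (Fi j0) (hFi j0) ⟨hRsub j0 hαR, hj0⟩
  have hne : i0 ≠ j0 := fun e => hkey (Fi i0) (hFi i0) ⟨hi0, e ▸ hj0⟩
  have hij : i0 < j0 := by
    rcases lt_trichotomy i0 j0 with h' | h' | h'
    · exact h'
    · exact absurd h' hne
    · exact absurd (htail j0 i0 h' β hj0 hβR α hi0 hαR) (not_lt_of_gt h2)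
  -- descend to level k inside Fi j0
  have hkle : schemeRho τ 𝓕 ξ β ≤ l' := by omega
  obtain ⟨F', hF', hβF', hsubF'⟩ :=
    scheme_descend τ X 𝓕 h l' (schemeRho τ 𝓕 ξ β) hkle (Fi j0) (hFi j0) β hj0
  -- initial segment: ξ ∈ F'
  have hξF' : ξ ∈ F' := by
    have := (h.2.2.1 (schemeRho τ 𝓕 ξ β) F hF F' hF').1 ξ hξF β
      (Finset.mem_inter.mpr ⟨hβF, hβF'⟩) (le_of_lt (h1.trans h2))
    exact (Finset.mem_inter.mp this).2
  have hξj0 : ξ ∈ Fi j0 := hsubF' hξF'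
  -- ξ must be in R
  have hξR : ξ ∈ R := by
    by_contra hξR
    exact absurd (htail i0 j0 hij α hi0 hαR ξ hξj0 hξR) (not_lt_of_gt h1)
  -- so ξ, α ∈ Fi i0, a level-l' member
  have : schemeRho τ 𝓕 ξ α ≤ l' := Nat.sInf_le ⟨Fi i0, hFi i0, hRsub i0 hξR, hi0⟩
  omega
end

section
/- Let F be a construction scheme over X with induced metric ρ, and let α, β, δ ∈ X be distinct and k ∈ ω. If (α)_k ∩ (β)_k ⊊ (α)_k ∩ (δ)_k, then (α)_k ∩ (β)_k = (β)_k ∩ (δ)_k. -/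
def ball (X : Set Ordinal) (ρ : Ordinal → Ordinal → ℕ) (α : Ordinal) (k : ℕ) :
    Set Ordinal :=
  {ξ | ξ ∈ X ∧ ξ ≤ α ∧ ρ ξ α ≤ k}

section Aux

variable {τ : SchemeType} {X : Set Ordinal} {𝓕 : Set (Finset Ordinal)}

/-- Descending through the Δ-system decomposition: any point of a level-`j+d` member
lies in some level-`j` member. -/
lemma scheme_descend_s10 (h : IsConstructionScheme τ X 𝓕) (j : ℕ) :
    ∀ d : ℕ, ∀ F ∈ Level τ 𝓕 (j + d), ∀ α ∈ F, ∃ F' ∈ Level τ 𝓕 j, α ∈ F' := by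
  intro d
  induction d with
  | zero => intro F hF α hα; exact ⟨F, hF, hα⟩
  | succ d ih =>
    intro F hF α hα
    obtain ⟨Fi, R, hFi, hunion, -, -, -, -⟩ := h.2.2.2 (j + d) F hF
    have : (α : Ordinal) ∈ (↑F : Set Ordinal) := hα
    rw [hunion] at this
    obtain ⟨i, hi⟩ := Set.mem_iUnion.mp this
    exact ih (Fi i) (hFi i) α hi

/-- Cross-level initial-segment property: if `E` has level `j ≤` level of `F`,
`x ∈ E`, `a ∈ E ∩ F` and `x ≤ a`, then `x ∈ F`. -/
lemma scheme_initialSeg (h : IsConstructionScheme τ X 𝓕) (j : ℕ) :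
    ∀ d : ℕ, ∀ E ∈ Level τ 𝓕 j, ∀ F ∈ Level τ 𝓕 (j + d),
      ∀ x ∈ E, ∀ a ∈ E, a ∈ F → x ≤ a → x ∈ F := by
  intro d
  induction d with
  | zero =>
    intro E hE F hF x hx a haE haF hxa
    have := (h.2.2.1 j E hE F hF).1 x hx a (Finset.mem_inter.mpr ⟨haE, haF⟩) hxa
    exact (Finset.mem_inter.mp this).2
  | succ d ih =>
    intro E hE F hF x hx a haE haF hxa
    obtain ⟨Fi, R, hFi, hunion, -, -, -, -⟩ := h.2.2.2 (j + d) F hF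
    have : (a : Ordinal) ∈ (↑F : Set Ordinal) := haF
    rw [hunion] at this
    obtain ⟨i, hi⟩ := Set.mem_iUnion.mp this
    have hxi : x ∈ Fi i := ih E hE (Fi i) (hFi i) x hx a haE hi hxa
    have : (x : Ordinal) ∈ (↑F : Set Ordinal) := by
      rw [hunion]; exact Set.mem_iUnion.mpr ⟨i, hxi⟩
    exact this

/-- The same, stated with an inequality of levels. -/
lemma scheme_initialSeg' (h : IsConstructionScheme τ X 𝓕) {j j' : ℕ} (hjj : j ≤ j')
    {E F : Finset Ordinal} (hE : E ∈ Level τ 𝓕 j) (hF : F ∈ Level τ 𝓕 j')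
    {x a : Ordinal} (hx : x ∈ E) (haE : a ∈ E) (haF : a ∈ F) (hxa : x ≤ a) : x ∈ F := by
  obtain ⟨d, rfl⟩ := Nat.exists_eq_add_of_le hjj
  exact scheme_initialSeg h j d E hE F hF x hx a haE haF hxa

lemma schemeRho_le_iff (h : IsConstructionScheme τ X 𝓕) {x y : Ordinal}
    (hx : x ∈ X) (hy : y ∈ X) {k : ℕ} :
    schemeRho τ 𝓕 x y ≤ k ↔ ∃ j ≤ k, ∃ F ∈ Level τ 𝓕 j, x ∈ F ∧ y ∈ F := by
  constructor
  · intro hle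
    have hne : {k : ℕ | ∃ F ∈ Level τ 𝓕 k, x ∈ F ∧ y ∈ F}.Nonempty := by
      obtain ⟨F, hF, hsub⟩ := h.2.1 {x, y} (by
        intro z hz
        simp only [Finset.coe_insert, Finset.coe_singleton, Set.mem_insert_iff,
          Set.mem_singleton_iff] at hz
        rcases hz with rfl | rfl
        · exact hx
        · exact hy)
      obtain ⟨-, -, j, hj⟩ := h.1 F hF
      exact ⟨j, F, ⟨hF, hj⟩, hsub (Finset.mem_insert_self _ _),
        hsub (Finset.mem_insert_of_mem (Finset.mem_singleton_self _))⟩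
    have hmem := Nat.sInf_mem hne
    exact ⟨_, hle, hmem⟩
  · rintro ⟨j, hjk, F, hF, hxF, hyF⟩
    exact le_trans (Nat.sInf_le ⟨F, hF, hxF, hyF⟩) hjk

/-- Key lemma: balls are "k-closed" with respect to each other. If `x` is in the
`k`-ball of `δ`, `b` is in the `k`-balls of both `α` and `δ`, and `x ≤ b`,
then `x` is in the `k`-ball of `α`. -/
lemma ball_downward (h : IsConstructionScheme τ X 𝓕) {α δ x b : Ordinal}
    (hα : α ∈ X) (hδ : δ ∈ X) {k : ℕ}
    (hxδ : x ∈ ball X (schemeRho τ 𝓕) δ k)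
    (hbα : b ∈ ball X (schemeRho τ 𝓕) α k)
    (hbδ : b ∈ ball X (schemeRho τ 𝓕) δ k)
    (hxb : x ≤ b) : x ∈ ball X (schemeRho τ 𝓕) α k := by
  obtain ⟨hxX, hxleδ, hxρδ⟩ := hxδ
  obtain ⟨hbX, hbleα, hbρα⟩ := hbα
  obtain ⟨-, hbleδ, hbρδ⟩ := hbδ
  have hxleα : x ≤ α := le_trans hxb hbleα
  refine ⟨hxX, hxleα, ?_⟩
  rw [schemeRho_le_iff h hxX hα]
  obtain ⟨j₁, hj₁k, G, hG, hbG, hαG⟩ := (schemeRho_le_iff h hbX hα).mp hbρα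
  obtain ⟨j₂, hj₂k, F, hF, hxF, hδF⟩ := (schemeRho_le_iff h hxX hδ).mp hxρδ
  obtain ⟨j₃, hj₃k, H, hH, hbH, hδH⟩ := (schemeRho_le_iff h hbX hδ).mp hbρδ
  -- Find a common member `M` of level `j' ≤ k` containing both `x` and `b`.
  obtain ⟨j', hj'k, M, hM, hxM, hbM⟩ :
      ∃ j' ≤ k, ∃ M ∈ Level τ 𝓕 j', x ∈ M ∧ b ∈ M := by
    rcases le_total j₂ j₃ with hle | hle
    · exact ⟨j₃, hj₃k, H, hH,
        scheme_initialSeg' h hle hF hH hxF hδF hδH hxleδ, hbH⟩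
    · exact ⟨j₂, hj₂k, F, hF, hxF,
        scheme_initialSeg' h hle hH hF hbH hδH hδF hbleδ⟩
  rcases le_total j' j₁ with hle | hle
  · exact ⟨j₁, hj₁k, G, hG, scheme_initialSeg' h hle hM hG hxM hbM hbG hxb, hαG⟩
  · -- Need a level-`j'` member containing `α`.
    obtain ⟨N, hN, hsub⟩ := h.2.1 {x, α} (by
      intro z hz
      simp only [Finset.coe_insert, Finset.coe_singleton, Set.mem_insert_iff,
        Set.mem_singleton_iff] at hz
      rcases hz with rfl | rfl
      · exact hxX
      · exact hα)
    obtain ⟨-, -, j₀, hj₀⟩ := h.1 N hN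
    rcases le_total j₀ k with hj₀k | hkj₀
    · exact ⟨j₀, hj₀k, N, ⟨hN, hj₀⟩, hsub (Finset.mem_insert_self _ _),
        hsub (Finset.mem_insert_of_mem (Finset.mem_singleton_self _))⟩
    · have hαN : α ∈ N := hsub (Finset.mem_insert_of_mem (Finset.mem_singleton_self _))
      have hex : ∃ F' ∈ Level τ 𝓕 j', α ∈ F' := by
        have hj'j₀ : j' ≤ j₀ := le_trans hj'k hkj₀
        obtain ⟨d, rfl⟩ := Nat.exists_eq_add_of_le hj'j₀
        exact scheme_descend_s10 h j' d N ⟨hN, hj₀⟩ α hαN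
      obtain ⟨F', hF', hαF'⟩ := hex
      have hbF' : b ∈ F' := scheme_initialSeg' h hle hG hF' hbG hαG hαF' hbleα
      have hxF' : x ∈ F' := scheme_initialSeg' h (le_refl j') hM hF' hxM hbM hbF' hxb
      exact ⟨j', hj'k, F', hF', hxF', hαF'⟩

end Aux

/-- If `(α)_k ∩ (β)_k ⊊ (α)_k ∩ (δ)_k`, then `(α)_k ∩ (β)_k = (β)_k ∩ (δ)_k`. -/
theorem ball_inter_eq (τ : SchemeType) (X : Set Ordinal)
    (𝓕 : Set (Finset Ordinal)) (h : IsConstructionScheme τ X 𝓕)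
    (α β δ : Ordinal) (hα : α ∈ X) (hβ : β ∈ X) (hδ : δ ∈ X)
    (hαβ : α ≠ β) (hβδ : β ≠ δ) (hαδ : α ≠ δ) (k : ℕ)
    (hss : ball X (schemeRho τ 𝓕) α k ∩ ball X (schemeRho τ 𝓕) β k ⊂
      ball X (schemeRho τ 𝓕) α k ∩ ball X (schemeRho τ 𝓕) δ k) :
    ball X (schemeRho τ 𝓕) α k ∩ ball X (schemeRho τ 𝓕) β k =
      ball X (schemeRho τ 𝓕) β k ∩ ball X (schemeRho τ 𝓕) δ k := by
  apply Set.eq_of_subset_of_subset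
  · intro ξ hξ
    exact ⟨hξ.2, (hss.1 hξ).2⟩
  · intro ξ hξ
    by_contra hξA
    obtain ⟨η, hηB, hηA⟩ := Set.exists_of_ssubset hss
    rcases le_total ξ η with hle | hle
    · have : ξ ∈ ball X (schemeRho τ 𝓕) α k :=
        ball_downward h hα hδ hξ.2 hηB.1 hηB.2 hle
      exact hξA ⟨this, hξ.1⟩
    · have : η ∈ ball X (schemeRho τ 𝓕) β k :=
        ball_downward h hβ hδ hηB.2 hξ.1 hξ.2 hle
      exact hηA ⟨hηB.1, this⟩
end

section
/- If X is a finite set of ordinals, then there is at most one construction scheme over X of a given type τ. -/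
lemma root_unique {F R S : Finset Ordinal} (hRF : R ⊆ F) (hSF : S ⊆ F)
    (hcard : R.card = S.card)
    (hR : ∀ a ∈ R, ∀ b ∈ F, b ∉ R → a < b)
    (hS : ∀ a ∈ S, ∀ b ∈ F, b ∉ S → a < b) : R = S := by
  have key : R ⊆ S := by
    intro a ha
    by_contra haS
    have hSR : ¬ S ⊆ R := by
      intro h
      have : S = R := Finset.eq_of_subset_of_card_le h hcard.le
      exact haS (this ▸ ha)
    obtain ⟨b, hb, hbR⟩ := Finset.not_subset.1 hSR
    have h1 : a < b := hR a ha b (hSF hb) hbR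
    have h2 : b < a := hS b hb a (hRF ha) haS
    exact absurd h1 (not_lt.2 h2.le)
  exact Finset.eq_of_subset_of_card_le key hcard.ge

lemma pieces_unique {n c r : ℕ} (hn : 2 ≤ n) (_hrc : r < c)
    {F : Finset Ordinal} {Fi Gi : Fin n → Finset Ordinal} {R S : Finset Ordinal}
    (hFc : ∀ i, (Fi i).card = c) (hGc : ∀ i, (Gi i).card = c)
    (hFU : (↑F : Set Ordinal) = ⋃ i, ↑(Fi i))
    (hGU : (↑F : Set Ordinal) = ⋃ i, ↑(Gi i))
    (hRc : R.card = r) (hSc : S.card = r)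
    (hFI : ∀ i j, i ≠ j → Fi i ∩ Fi j = R)
    (hGI : ∀ i j, i ≠ j → Gi i ∩ Gi j = S)
    (hFr : ∀ i, ∀ a ∈ R, ∀ b ∈ Fi i, b ∉ R → a < b)
    (hGr : ∀ i, ∀ a ∈ S, ∀ b ∈ Gi i, b ∉ S → a < b)
    (hFo : ∀ i j : Fin n, i < j → ∀ a ∈ Fi i, a ∉ R → ∀ b ∈ Fi j, b ∉ R → a < b)
    (hGo : ∀ i j : Fin n, i < j → ∀ a ∈ Gi i, a ∉ S → ∀ b ∈ Gi j, b ∉ S → a < b) :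
    ∀ i, Fi i = Gi i := by
  have hFsub : ∀ i, Fi i ⊆ F := by
    intro i x hx
    have : (x : Ordinal) ∈ (↑F : Set Ordinal) := by
      rw [hFU]; exact Set.mem_iUnion.2 ⟨i, hx⟩
    exact this
  have hGsub : ∀ i, Gi i ⊆ F := by
    intro i x hx
    have : (x : Ordinal) ∈ (↑F : Set Ordinal) := by
      rw [hGU]; exact Set.mem_iUnion.2 ⟨i, hx⟩
    exact this
  have hmemF : ∀ x ∈ F, ∃ i, x ∈ Fi i := by
    intro x hx
    have : (x : Ordinal) ∈ ⋃ i, (↑(Fi i) : Set Ordinal) := by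
      rw [← hFU]; exact hx
    obtain ⟨i, hi⟩ := Set.mem_iUnion.1 this
    exact ⟨i, hi⟩
  have hmemG : ∀ x ∈ F, ∃ i, x ∈ Gi i := by
    intro x hx
    have : (x : Ordinal) ∈ ⋃ i, (↑(Gi i) : Set Ordinal) := by
      rw [← hGU]; exact hx
    obtain ⟨i, hi⟩ := Set.mem_iUnion.1 this
    exact ⟨i, hi⟩
  have other : ∀ i : Fin n, ∃ j : Fin n, j ≠ i := by
    intro i
    refine ⟨if i.val = 0 then ⟨1, by omega⟩ else ⟨0, by omega⟩, ?_⟩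
    split_ifs with h
    · exact Fin.ne_of_val_ne (show (1:ℕ) ≠ i.val by omega)
    · exact Fin.ne_of_val_ne (show (0:ℕ) ≠ i.val by omega)
  have hRFi : ∀ i, R ⊆ Fi i := by
    intro i
    obtain ⟨j, hj⟩ := other i
    rw [← hFI j i hj]
    exact Finset.inter_subset_right
  have hSGi : ∀ i, S ⊆ Gi i := by
    intro i
    obtain ⟨j, hj⟩ := other i
    rw [← hGI j i hj]
    exact Finset.inter_subset_right
  have hRS : R = S := by
    refine root_unique ((hRFi ⟨0, by omega⟩).trans (hFsub _))
      ((hSGi ⟨0, by omega⟩).trans (hGsub _)) (by rw [hRc, hSc]) ?_ ?_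
    · intro a ha b hb hbR
      obtain ⟨i, hi⟩ := hmemF b hb
      exact hFr i a ha b hi hbR
    · intro a ha b hb hbS
      obtain ⟨i, hi⟩ := hmemG b hb
      exact hGr i a ha b hi hbS
  subst hRS
  have hTcard : ∀ i, (Fi i \ R).card = c - r := by
    intro i; rw [Finset.card_sdiff_of_subset (hRFi i), hFc, hRc]
  have hUcard : ∀ i, (Gi i \ R).card = c - r := by
    intro i; rw [Finset.card_sdiff_of_subset (hSGi i), hGc, hRc]
  have key : ∀ N : ℕ, ∀ i : Fin n, i.val = N → Fi i \ R = Gi i \ R := by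
    intro N
    induction N using Nat.strong_induction_on with
    | _ N ih =>
      intro i hiN
      by_contra hne
      have hcc : (Fi i \ R).card = (Gi i \ R).card := by rw [hTcard, hUcard]
      obtain ⟨x, hxT, hxU⟩ : ∃ x, x ∈ Fi i \ R ∧ x ∉ Gi i \ R := by
        by_contra h
        push_neg at h
        exact hne (Finset.eq_of_subset_of_card_le (fun x hx => h x hx) hcc.ge)
      obtain ⟨y, hyU, hyT⟩ : ∃ y, y ∈ Gi i \ R ∧ y ∉ Fi i \ R := by
        by_contra h
        push_neg at h
        exact hne (Finset.eq_of_subset_of_card_le (fun x hx => h x hx) hcc.le).symm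
      rw [Finset.mem_sdiff] at hxT hyU
      have hxR : x ∉ R := hxT.2
      have hyR : y ∉ R := hyU.2
      have hxF : x ∈ F := hFsub i hxT.1
      have hyF : y ∈ F := hGsub i hyU.1
      obtain ⟨j, hj⟩ := hmemG x hxF
      obtain ⟨l, hl⟩ := hmemF y hyF
      have hji : j ≠ i := by
        rintro rfl
        exact hxU (Finset.mem_sdiff.2 ⟨hj, hxR⟩)
      have hli : l ≠ i := by
        rintro rfl
        exact hyT (Finset.mem_sdiff.2 ⟨hl, hyR⟩)
      have hij : i < j := by
        rcases lt_or_gt_of_ne hji with h | h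
        · exfalso
          have := ih j.val (by omega) j rfl
          have hxGj : x ∈ Fi j \ R := this ▸ Finset.mem_sdiff.2 ⟨hj, hxR⟩
          have : x ∈ Fi i ∩ Fi j := Finset.mem_inter.2 ⟨hxT.1, (Finset.mem_sdiff.1 hxGj).1⟩
          rw [hFI i j hji.symm] at this
          exact hxR this
        · exact h
      have hil : i < l := by
        rcases lt_or_gt_of_ne hli with h | h
        · exfalso
          have := ih l.val (by omega) l rfl
          have hyGl : y ∈ Gi l \ R := this ▸ Finset.mem_sdiff.2 ⟨hl, hyR⟩
          have : y ∈ Gi i ∩ Gi l := Finset.mem_inter.2 ⟨hyU.1, (Finset.mem_sdiff.1 hyGl).1⟩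
          rw [hGI i l hli.symm] at this
          exact hyR this
        · exact h
      have h1 : y < x := hGo i j hij y hyU.1 hyR x hj hxR
      have h2 : x < y := hFo i l hil x hxT.1 hxR y hl hyR
      exact absurd h1 (not_lt.2 h2.le)
  intro i
  have hT := key i.val i rfl
  have e1 : (Fi i \ R) ∪ R = Fi i := Finset.sdiff_union_of_subset (hRFi i)
  have e2 : (Gi i \ R) ∪ R = Gi i := Finset.sdiff_union_of_subset (hSGi i)
  rw [← e1, ← e2, hT]


lemma scheme_cover (τ : SchemeType) (X : Set Ordinal) (𝓗 : Set (Finset Ordinal))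
    (h : IsConstructionScheme τ X 𝓗) {Xf : Finset Ordinal} {K : ℕ}
    (hK : Xf ∈ Level τ 𝓗 K) :
    ∀ j, ∀ x ∈ Xf, ∃ F ∈ Level τ 𝓗 (K - j), x ∈ F := by
  intro j
  induction j with
  | zero => intro x hx; exact ⟨Xf, by simpa using hK, hx⟩
  | succ j ih =>
    intro x hx
    obtain ⟨F, hF, hxF⟩ := ih x hx
    rcases Nat.lt_or_ge j K with hj | hj
    · have hKj : K - j = (K - (j+1)) + 1 := by omega
      rw [hKj] at hF
      obtain ⟨Fi, R, hFi, hFU, -, -, -, -⟩ := h.2.2.2 _ F hF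
      have hx2 : (x : Ordinal) ∈ (↑F : Set Ordinal) := hxF
      rw [hFU] at hx2
      obtain ⟨i, hi⟩ := Set.mem_iUnion.1 hx2
      exact ⟨Fi i, hFi i, hi⟩
    · have heq : K - (j+1) = K - j := by omega
      rw [heq]
      exact ⟨F, hF, hxF⟩

lemma level_top (τ : SchemeType) (X : Set Ordinal) (hX : X.Finite)
    (𝓗 : Set (Finset Ordinal)) (h : IsConstructionScheme τ X 𝓗) {K : ℕ}
    (hK : hX.toFinset ∈ Level τ 𝓗 K) :
    ∀ F ∈ Level τ 𝓗 K, F = hX.toFinset := by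
  intro F hF
  have hFX : ↑F ⊆ X := (h.1 F hF.1).2.1
  have hsub : F ⊆ hX.toFinset := fun a ha => hX.mem_toFinset.2 (hFX ha)
  exact Finset.eq_of_subset_of_card_le hsub (by rw [hF.2, hK.2])

lemma top_mem (τ : SchemeType) (X : Set Ordinal) (hX : X.Finite)
    (𝓗 : Set (Finset Ordinal)) (h : IsConstructionScheme τ X 𝓗) :
    ∃ K, hX.toFinset ∈ Level τ 𝓗 K := by
  obtain ⟨F, hF, hsub⟩ := h.2.1 hX.toFinset (by rw [hX.coe_toFinset])
  obtain ⟨-, hFX, K, hK⟩ := h.1 F hF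
  have hFeq : F = hX.toFinset :=
    Finset.Subset.antisymm (fun a ha => hX.mem_toFinset.2 (hFX ha)) hsub
  exact ⟨K, hFeq ▸ hF, hFeq ▸ hK⟩

lemma level_step (τ : SchemeType) (X : Set Ordinal) (𝓕 𝓖 : Set (Finset Ordinal))
    (h𝓕 : IsConstructionScheme τ X 𝓕) (h𝓖 : IsConstructionScheme τ X 𝓖)
    (k : ℕ) (hsub : Level τ 𝓕 (k+1) ⊆ Level τ 𝓖 (k+1))
    (hcov : ∀ x : Ordinal, x ∈ X → ∃ F ∈ Level τ 𝓕 (k+1), x ∈ F) :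
    Level τ 𝓕 k ⊆ Level τ 𝓖 k := by
  intro E hE
  have hE𝓕 : E ∈ 𝓕 := hE.1
  have hEc : E.card = τ.m k := hE.2
  obtain ⟨hEne, hEX, -⟩ := h𝓕.1 E hE𝓕
  set x := E.max' hEne with hx
  have hxE : x ∈ E := E.max'_mem hEne
  obtain ⟨F, hF, hxF⟩ := hcov x (hEX hxE)
  obtain ⟨Fi, R, hFi, hFU, hRc, hFI, hFr, hFo⟩ := h𝓕.2.2.2 k F hF
  have hx2 : (x : Ordinal) ∈ (↑F : Set Ordinal) := hxF
  rw [hFU] at hx2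
  obtain ⟨i, hi⟩ := Set.mem_iUnion.1 hx2
  have hEFi : E = Fi i := by
    have hinit := (h𝓕.2.2.1 k E hE (Fi i) (hFi i)).1
    have hsubE : E ⊆ Fi i := by
      intro b hb
      have hmem : b ∈ E ∩ Fi i :=
        hinit b hb x (Finset.mem_inter.2 ⟨hxE, hi⟩) (E.le_max' b hb)
      exact (Finset.mem_inter.1 hmem).2
    exact Finset.eq_of_subset_of_card_le hsubE (by rw [hEc, (hFi i).2])
  obtain ⟨Gi, S, hGi, hGU, hSc, hGI, hGr, hGo⟩ := h𝓖.2.2.2 k F (hsub hF)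
  have hpieces := pieces_unique (τ.two_le_n k) (τ.r_lt_m k)
    (fun i => (hFi i).2) (fun i => (hGi i).2) hFU hGU hRc hSc hFI hGI hFr hGr hFo hGo i
  rw [hEFi, hpieces]
  exact hGi i

/-- Over a finite set of ordinals there is at most one construction scheme of a
given type. -/
theorem finite_scheme_unique (τ : SchemeType) (X : Set Ordinal) (hX : X.Finite)
    (𝓕 𝓖 : Set (Finset Ordinal))
    (h𝓕 : IsConstructionScheme τ X 𝓕) (h𝓖 : IsConstructionScheme τ X 𝓖) :
    𝓕 = 𝓖 := by
  obtain ⟨K, hK𝓕⟩ := top_mem τ X hX 𝓕 h𝓕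
  obtain ⟨K', hK𝓖⟩ := top_mem τ X hX 𝓖 h𝓖
  have hKK : K = K' := τ.m_strictMono.injective (by rw [← hK𝓕.2, ← hK𝓖.2])
  subst hKK
  have hlevel : ∀ j, Level τ 𝓕 (K - j) = Level τ 𝓖 (K - j) := by
    intro j
    induction j with
    | zero =>
      simp only [Nat.sub_zero]
      ext F
      constructor
      · intro hF; rw [level_top τ X hX 𝓕 h𝓕 hK𝓕 F hF]; exact hK𝓖
      · intro hF; rw [level_top τ X hX 𝓖 h𝓖 hK𝓖 F hF]; exact hK𝓕
    | succ j ih =>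
      rcases Nat.lt_or_ge j K with hj | hj
      · have hKj : K - j = (K - (j+1)) + 1 := by omega
        rw [hKj] at ih
        have hcov𝓕 : ∀ x : Ordinal, x ∈ X → ∃ F ∈ Level τ 𝓕 ((K-(j+1))+1), x ∈ F := by
          intro x hx
          have h := scheme_cover τ X 𝓕 h𝓕 hK𝓕 j x (hX.mem_toFinset.2 hx)
          rwa [hKj] at h
        have hcov𝓖 : ∀ x : Ordinal, x ∈ X → ∃ F ∈ Level τ 𝓖 ((K-(j+1))+1), x ∈ F := by
          intro x hx
          have h := scheme_cover τ X 𝓖 h𝓖 hK𝓖 j x (hX.mem_toFinset.2 hx)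
          rwa [hKj] at h
        exact Set.Subset.antisymm
          (level_step τ X 𝓕 𝓖 h𝓕 h𝓖 _ ih.le hcov𝓕)
          (level_step τ X 𝓖 𝓕 h𝓖 h𝓕 _ ih.symm.le hcov𝓖)
      · have heq : K - (j+1) = K - j := by omega
        rw [heq]
        exact ih
  ext F
  constructor
  · intro hF
    obtain ⟨-, hFX, k, hk⟩ := h𝓕.1 F hF
    have hkK : k ≤ K := by
      have hle : F.card ≤ (hX.toFinset).card :=
        Finset.card_le_card (fun a ha => hX.mem_toFinset.2 (hFX ha))
      rw [hk, hK𝓕.2] at hle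
      exact τ.m_strictMono.le_iff_le.1 hle
    have hmem : F ∈ Level τ 𝓕 (K - (K - k)) := by
      rw [Nat.sub_sub_self hkK]; exact ⟨hF, hk⟩
    rw [hlevel (K - k)] at hmem
    exact hmem.1
  · intro hF
    obtain ⟨-, hFX, k, hk⟩ := h𝓖.1 F hF
    have hkK : k ≤ K := by
      have hle : F.card ≤ (hX.toFinset).card :=
        Finset.card_le_card (fun a ha => hX.mem_toFinset.2 (hFX ha))
      rw [hk, hK𝓖.2] at hle
      exact τ.m_strictMono.le_iff_le.1 hle
    have hmem : F ∈ Level τ 𝓖 (K - (K - k)) := by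
      rw [Nat.sub_sub_self hkK]; exact ⟨hF, hk⟩
    rw [← hlevel (K - k)] at hmem
    exact hmem.1
end

section
/- For every good type τ there is exactly one construction scheme over ω of type τ; moreover this scheme contains {m_k : k ∈ ω} (i.e., each initial segment m_k of ω is a member of the scheme). -/
/-- `τ` is good: every `r ∈ ω` occurs as `r_k` for infinitely many `k`. -/
def GoodType (τ : SchemeType) : Prop :=
  ∀ c N : ℕ, ∃ k, N ≤ k ∧ τ.r (k + 1) = c

/-!
The canonical scheme is built on positions: the `i`-th piece of a level-`(k+1)` set enumerated
increasingly by `g` is the image of `m_k` under `g ∘ piecePos k i`, and the canonical members are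
the images of the initial segments `m_k` under composites of such maps.

Uniqueness rests on two facts. A root-tail-tail decomposition of a finite linear order with
prescribed sizes is unique, because the root together with the first `i` pieces must be the
initial segment of the order of its cardinality. And in a scheme over `ω` the initial segment
`m_l` is a member: it is an initial segment of every member containing it, hence lies in the
first piece of such a member, and so on down to level `l`. Together these put the canonical
scheme inside every scheme over `ω`, and a scheme containing a cofinal scheme is equal to it.
-/

open Finset Ordinal

section LinearOrder

variable {α β : Type*} [LinearOrder α] [LinearOrder β]

structure IsInitialSegment (A F : Finset α) : Prop where
  subset : A ⊆ F
  mem_of_le : ∀ b ∈ F, ∀ a ∈ A, b ≤ a → b ∈ A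

namespace IsInitialSegment

variable {A B F : Finset α}

theorem subset_of_card_le (hA : IsInitialSegment A F) (hB : IsInitialSegment B F)
    (hcard : A.card ≤ B.card) : A ⊆ B := by
  intro x hxA
  by_contra hxB
  have hBA : B ⊆ A := fun y hyB =>
    hA.mem_of_le y (hB.subset hyB) x hxA <|
      le_of_lt <| not_le.mp fun hxy => hxB (hB.mem_of_le x (hA.subset hxA) y hyB hxy)
  exact absurd hcard (not_le.mpr (card_lt_card ⟨hBA, fun hAB => hxB (hAB hxA)⟩))

theorem eq_of_card_eq (hA : IsInitialSegment A F) (hB : IsInitialSegment B F)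
    (hcard : A.card = B.card) : A = B :=
  (hA.subset_of_card_le hB hcard.le).antisymm (hB.subset_of_card_le hA hcard.ge)

end IsInitialSegment

structure IsRootTailTail {n : ℕ} (F : Finset α) (Fi : Fin n → Finset α) (R : Finset α) :
    Prop where
  coe_eq_iUnion : (↑F : Set α) = ⋃ i, ↑(Fi i)
  inter_eq : ∀ i j, i ≠ j → Fi i ∩ Fi j = R
  root_lt : ∀ i, ∀ a ∈ R, ∀ b ∈ Fi i, b ∉ R → a < b
  tail_lt : ∀ i j, i < j → ∀ a ∈ Fi i, a ∉ R → ∀ b ∈ Fi j, b ∉ R → a < b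

def prefixUnion {n : ℕ} (Fi : Fin n → Finset α) (R : Finset α) (i : ℕ) : Finset α :=
  R ∪ (univ.filter fun j : Fin n => (j : ℕ) < i).biUnion Fi

section prefixUnion

variable {n : ℕ} (Fi : Fin n → Finset α) (R : Finset α)

@[simp]
theorem prefixUnion_zero : prefixUnion Fi R 0 = R := by
  simp [prefixUnion]

theorem prefixUnion_succ (j : Fin n) :
    prefixUnion Fi R (j + 1) = prefixUnion Fi R j ∪ Fi j := by
  ext x
  simp only [prefixUnion, mem_union, mem_biUnion, mem_filter, mem_univ, true_and]
  constructor
  · rintro (hx | ⟨i, hi, hx⟩)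
    · exact Or.inl (Or.inl hx)
    · rcases Nat.lt_succ_iff_lt_or_eq.mp hi with hi | hi
      · exact Or.inl (Or.inr ⟨i, hi, hx⟩)
      · exact Or.inr (Fin.ext hi ▸ hx)
  · rintro ((hx | ⟨i, hi, hx⟩) | hx)
    · exact Or.inl hx
    · exact Or.inr ⟨i, hi.trans (Nat.lt_succ_self _), hx⟩
    · exact Or.inr ⟨j, Nat.lt_succ_self _, hx⟩

end prefixUnion

namespace IsRootTailTail

variable {n : ℕ} {F R : Finset α} {Fi : Fin n → Finset α}

theorem mem_iff (h : IsRootTailTail F Fi R) {x : α} : x ∈ F ↔ ∃ i, x ∈ Fi i := by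
  rw [← mem_coe, h.coe_eq_iUnion, Set.mem_iUnion]
  rfl

theorem subset (h : IsRootTailTail F Fi R) (i : Fin n) : Fi i ⊆ F :=
  fun _ hx => h.mem_iff.mpr ⟨i, hx⟩

theorem root_subset (h : IsRootTailTail F Fi R) (hn : 2 ≤ n) (i : Fin n) : R ⊆ Fi i := by
  have := Fin.nontrivial_iff_two_le.mpr hn
  obtain ⟨j, hj⟩ := exists_ne i
  rw [← h.inter_eq i j hj.symm]
  exact inter_subset_left

theorem inter_prefixUnion (h : IsRootTailTail F Fi R) (hn : 2 ≤ n) (j : Fin n) :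
    Fi j ∩ prefixUnion Fi R j = R := by
  refine subset_antisymm (fun x hx => ?_) (subset_inter (h.root_subset hn j) subset_union_left)
  obtain ⟨hxj, hx⟩ := mem_inter.mp hx
  simp only [prefixUnion, mem_union, mem_biUnion, mem_filter, mem_univ, true_and] at hx
  rcases hx with hx | ⟨i, hi, hxi⟩
  · exact hx
  · rw [← h.inter_eq i j (Fin.ne_of_lt hi)]
    exact mem_inter.mpr ⟨hxi, hxj⟩

theorem isInitialSegment_prefixUnion (h : IsRootTailTail F Fi R) (hn : 2 ≤ n) (i : ℕ) :
    IsInitialSegment (prefixUnion Fi R i) F := by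
  have hR : R ⊆ F := (h.root_subset hn ⟨0, by omega⟩).trans (h.subset _)
  refine ⟨union_subset hR (biUnion_subset.mpr fun j _ => h.subset j), fun b hbF a ha hba => ?_⟩
  obtain ⟨j, hbj⟩ := h.mem_iff.mp hbF
  simp only [prefixUnion, mem_union, mem_biUnion, mem_filter, mem_univ, true_and] at ha ⊢
  by_cases hbR : b ∈ R
  · exact Or.inl hbR
  by_cases hji : (j : ℕ) < i
  · exact Or.inr ⟨j, hji, hbj⟩
  exfalso
  refine (not_lt.mpr hba) ?_
  rcases ha with haR | ⟨j', hj'i, haj'⟩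
  · exact h.root_lt j a haR b hbj hbR
  · by_cases haR : a ∈ R
    · exact h.root_lt j a haR b hbj hbR
    · exact h.tail_lt j' j (by rw [Fin.lt_def]; omega) a haj' haR b hbj hbR

theorem isInitialSegment_zero (h : IsRootTailTail F Fi R) (hn : 2 ≤ n) :
    IsInitialSegment (Fi ⟨0, by omega⟩) F := by
  have h1 := h.isInitialSegment_prefixUnion hn 1
  rwa [show (1 : ℕ) = ((⟨0, by omega⟩ : Fin n) : ℕ) + 1 from rfl, prefixUnion_succ,
    prefixUnion_zero, union_eq_right.mpr (h.root_subset hn _)] at h1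

theorem eq_sdiff_prefixUnion (h : IsRootTailTail F Fi R) (hn : 2 ≤ n) (j : Fin n) :
    Fi j = (prefixUnion Fi R (j + 1) \ prefixUnion Fi R j) ∪ prefixUnion Fi R 0 := by
  rw [prefixUnion_succ, prefixUnion_zero, union_sdiff_left]
  ext x
  by_cases hx : x ∈ prefixUnion Fi R j
  · have hxR : x ∈ Fi j ↔ x ∈ R :=
      ⟨fun hxj => h.inter_prefixUnion hn j ▸ mem_inter.mpr ⟨hxj, hx⟩,
        fun hxR => h.root_subset hn j hxR⟩
    simp [hx, hxR]
  · simp only [mem_union, mem_sdiff, hx, not_false_eq_true, and_true]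
    exact ⟨Or.inl, fun h' => h'.elim id fun hxR => h.root_subset hn j hxR⟩

theorem card_prefixUnion_succ (h : IsRootTailTail F Fi R) (hn : 2 ≤ n) (j : Fin n) :
    (prefixUnion Fi R (j + 1)).card + R.card = (prefixUnion Fi R j).card + (Fi j).card := by
  have := card_union_add_card_inter (prefixUnion Fi R j) (Fi j)
  rwa [inter_comm, h.inter_prefixUnion hn j, ← prefixUnion_succ] at this

theorem eq_of_card_eq {S : Finset α} {Gi : Fin n → Finset α} (hF : IsRootTailTail F Fi R)
    (hG : IsRootTailTail F Gi S) (hn : 2 ≤ n) (hR : R.card = S.card)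
    (hcard : ∀ i, (Fi i).card = (Gi i).card) : Fi = Gi := by
  have hU : ∀ i ≤ n, prefixUnion Fi R i = prefixUnion Gi S i := by
    intro i hi
    induction i with
    | zero =>
      simpa using (hF.isInitialSegment_prefixUnion hn 0).eq_of_card_eq
        (hG.isInitialSegment_prefixUnion hn 0) (by simpa using hR)
    | succ i ih =>
      have hFc := hF.card_prefixUnion_succ hn ⟨i, hi⟩
      have hGc := hG.card_prefixUnion_succ hn ⟨i, hi⟩
      simp only at hFc hGc
      rw [ih (by omega)] at hFc
      exact (hF.isInitialSegment_prefixUnion hn _).eq_of_card_eq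
        (hG.isInitialSegment_prefixUnion hn _) (by rw [hcard] at hFc; omega)
  funext j
  rw [hF.eq_sdiff_prefixUnion hn, hG.eq_sdiff_prefixUnion hn, hU _ j.isLt, hU _ j.isLt.le,
    hU 0 (Nat.zero_le n)]

theorem image {f : α → β} (hf : StrictMono f) (h : IsRootTailTail F Fi R) :
    IsRootTailTail (F.image f) (fun i => (Fi i).image f) (R.image f) where
  coe_eq_iUnion := by
    simp only [coe_image, h.coe_eq_iUnion, Set.image_iUnion]
  inter_eq i j hij := by
    rw [← image_inter _ _ hf.injective, h.inter_eq i j hij]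
  root_lt i := by
    simp only [mem_image]
    rintro _ ⟨a, ha, rfl⟩ _ ⟨b, hb, rfl⟩ hbR
    exact hf (h.root_lt i a ha b hb fun hbR' => hbR ⟨b, hbR', rfl⟩)
  tail_lt i j hij := by
    simp only [mem_image]
    rintro _ ⟨a, ha, rfl⟩ haR _ ⟨b, hb, rfl⟩ hbR
    exact hf (h.tail_lt i j hij a ha (fun haR' => haR ⟨a, haR', rfl⟩) b hb
      fun hbR' => hbR ⟨b, hbR', rfl⟩)

end IsRootTailTail

end LinearOrder

theorem exists_subset_image_natCast_range {A : Finset Ordinal} (hA : ↑A ⊆ Set.Iio ω) :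
    ∃ N, A ⊆ (range N).image Nat.cast := by
  induction A using Finset.induction_on with
  | empty => exact ⟨0, empty_subset _⟩
  | insert a A _ ih =>
    rw [coe_insert, Set.insert_subset_iff] at hA
    obtain ⟨N, hN⟩ := ih hA.2
    obtain ⟨x, rfl⟩ := Ordinal.lt_omega0.mp hA.1
    refine ⟨max N (x + 1), insert_subset ?_ (hN.trans ?_)⟩
    · exact mem_image_of_mem _ (mem_range.mpr (by omega))
    · exact image_subset_image (range_subset_range.mpr (le_max_left _ _))

theorem isInitialSegment_image_natCast_range {N : ℕ} {G : Finset Ordinal}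
    (hG : ↑G ⊆ Set.Iio ω) (hsub : (range N).image Nat.cast ⊆ G) :
    IsInitialSegment ((range N).image Nat.cast) G := by
  refine ⟨hsub, fun b hb a ha hba => ?_⟩
  obtain ⟨x, hx, rfl⟩ := mem_image.mp ha
  obtain ⟨y, rfl⟩ := Ordinal.lt_omega0.mp (hG hb)
  exact mem_image_of_mem _ (mem_range.mpr ((Nat.cast_le.mp hba).trans_lt (mem_range.mp hx)))

namespace SchemeType

variable (τ : SchemeType)

def tailLen (k : ℕ) : ℕ := τ.m k - τ.r (k + 1)

theorem m_eq_r_add_tailLen (k : ℕ) : τ.m k = τ.r (k + 1) + τ.tailLen k := by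
  have := τ.r_lt_m k
  unfold tailLen
  omega

theorem m_succ_eq (k : ℕ) : τ.m (k + 1) = τ.r (k + 1) + τ.n (k + 1) * τ.tailLen k := by
  rw [τ.m_succ k, mul_comm]
  rfl

theorem tailLen_pos (k : ℕ) : 0 < τ.tailLen k := by
  have := τ.r_lt_m k
  unfold tailLen
  omega

theorem strictMono_m : StrictMono τ.m := by
  refine strictMono_nat_of_lt_succ fun k => ?_
  have := Nat.mul_le_mul_right (τ.tailLen k) (τ.two_le_n k)
  have := τ.tailLen_pos k
  rw [τ.m_succ_eq k, τ.m_eq_r_add_tailLen k]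
  omega

theorem lt_m (k : ℕ) : k < τ.m k := by
  induction k with
  | zero => simp [τ.m_zero]
  | succ k ih =>
    have := τ.strictMono_m (Nat.lt_add_one k)
    omega

/-- Position, inside a level-`(k+1)` set, of the `x`-th element of its `i`-th level-`k` piece:
the first `r_{k+1}` positions form the root, and the `i`-th tail is shifted by `i` tail lengths. -/
def piecePos (k i x : ℕ) : ℕ :=
  if x < τ.r (k + 1) then x else x + i * τ.tailLen k

theorem piecePos_zero (k : ℕ) : τ.piecePos k 0 = id := by
  funext x
  simp [piecePos]

theorem strictMono_piecePos (k i : ℕ) : StrictMono (τ.piecePos k i) := by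
  intro x y hxy
  unfold piecePos
  split_ifs <;> omega

theorem mem_image_piecePos_range {k i x : ℕ} :
    x ∈ (range (τ.m k)).image (τ.piecePos k i) ↔
      x < τ.r (k + 1) ∨
        τ.r (k + 1) + i * τ.tailLen k ≤ x ∧ x < τ.r (k + 1) + (i + 1) * τ.tailLen k := by
  have := τ.m_eq_r_add_tailLen k
  rw [add_one_mul]
  simp only [mem_image, mem_range, piecePos]
  constructor
  · rintro ⟨y, hy, rfl⟩
    split_ifs <;> omega
  · rintro (hx | hx)
    · exact ⟨x, by omega, if_pos hx⟩
    · exact ⟨x - i * τ.tailLen k, by omega, by rw [if_neg (by omega)]; omega⟩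

theorem lt_m_succ_iff_exists_mem_image_piecePos_range {k x : ℕ} :
    x < τ.m (k + 1) ↔ ∃ i : Fin (τ.n (k + 1)), x ∈ (range (τ.m k)).image (τ.piecePos k i) := by
  have hm := τ.m_succ_eq k
  have hs := τ.tailLen_pos k
  simp only [mem_image_piecePos_range]
  constructor
  · intro hx
    by_cases hxr : x < τ.r (k + 1)
    · exact ⟨⟨0, by have := τ.two_le_n k; omega⟩, Or.inl hxr⟩
    have hdiv : (x - τ.r (k + 1)) / τ.tailLen k < τ.n (k + 1) := by
      rw [Nat.div_lt_iff_lt_mul hs]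
      omega
    have h1 := Nat.div_mul_le_self (x - τ.r (k + 1)) (τ.tailLen k)
    have h2 := Nat.lt_div_mul_add (a := x - τ.r (k + 1)) hs
    refine ⟨⟨_, hdiv⟩, Or.inr ⟨by dsimp only; omega, ?_⟩⟩
    dsimp only
    rw [add_one_mul]
    omega
  · rintro ⟨i, hx | hx⟩
    · omega
    · have hi : (i : ℕ) + 1 ≤ τ.n (k + 1) := i.isLt
      have := Nat.mul_le_mul_right (τ.tailLen k) hi
      omega

theorem isRootTailTail_piecePos (k : ℕ) :
    IsRootTailTail (range (τ.m (k + 1)))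
      (fun i : Fin (τ.n (k + 1)) => (range (τ.m k)).image (τ.piecePos k i))
      (range (τ.r (k + 1))) := by
  refine ⟨?_, ?_, ?_, ?_⟩
  · ext x
    simpa only [coe_range, Set.mem_Iio, Set.mem_iUnion, mem_coe] using
      τ.lt_m_succ_iff_exists_mem_image_piecePos_range
  · intro i j hij
    ext x
    simp only [mem_inter, mem_image_piecePos_range, mem_range]
    refine ⟨fun ⟨hi, hj⟩ => ?_, fun hx => ⟨Or.inl hx, Or.inl hx⟩⟩
    refine hi.elim id fun hi => hj.elim id fun hj => absurd (Fin.ext ?_) hij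
    have h1 := Nat.lt_of_mul_lt_mul_right (a := τ.tailLen k) (b := i) (c := j + 1) (by omega)
    have h2 := Nat.lt_of_mul_lt_mul_right (a := τ.tailLen k) (b := j) (c := i + 1) (by omega)
    omega
  · intro i a ha b _ hb
    rw [mem_range] at ha hb
    omega
  · intro i j hij a ha haR b hb hbR
    rw [mem_range] at haR hbR
    rw [mem_image_piecePos_range] at ha hb
    have hij : (i : ℕ) + 1 ≤ j := hij
    have := Nat.mul_le_mul_right (τ.tailLen k) hij
    omega

theorem piecePos_lt_m_succ {k i x : ℕ} (hi : i < τ.n (k + 1)) (hx : x < τ.m k) :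
    τ.piecePos k i x < τ.m (k + 1) :=
  mem_range.mp <| (τ.isRootTailTail_piecePos k).subset ⟨i, hi⟩ <|
    mem_image_of_mem _ (mem_range.mpr hx)

theorem piecePos_eq_piecePos {k i j x y : ℕ} (hi : i < τ.n (k + 1)) (hj : j < τ.n (k + 1))
    (hij : i ≠ j) (hx : x < τ.m k) (hy : y < τ.m k) (h : τ.piecePos k i x = τ.piecePos k j y) :
    x < τ.r (k + 1) ∧ x = y := by
  have hroot : τ.piecePos k i x < τ.r (k + 1) := by
    rw [← mem_range, ← (τ.isRootTailTail_piecePos k).inter_eq ⟨i, hi⟩ ⟨j, hj⟩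
      (fun h => hij (Fin.val_eq_of_eq h)), mem_inter]
    exact ⟨mem_image_of_mem _ (mem_range.mpr hx), h ▸ mem_image_of_mem _ (mem_range.mpr hy)⟩
  unfold piecePos at h hroot
  split_ifs at h hroot <;> omega

/-- The maps `ℕ → ℕ` through which the level-`k` members of the canonical scheme sit inside
`m_{k+d}`: composites of `d` maps `piecePos`, one for each level between `k` and `k + d`. -/
def canonicalMaps (k : ℕ) : ℕ → Set (ℕ → ℕ)
  | 0 => {id}
  | d + 1 => {f | ∃ i < τ.n (k + d + 1), ∃ g ∈ canonicalMaps k d, f = τ.piecePos (k + d) i ∘ g}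

variable {τ}

@[simp]
theorem mem_canonicalMaps_zero {k : ℕ} {f : ℕ → ℕ} : f ∈ τ.canonicalMaps k 0 ↔ f = id :=
  Iff.rfl

theorem strictMono_of_mem_canonicalMaps {k d : ℕ} {f : ℕ → ℕ} (hf : f ∈ τ.canonicalMaps k d) :
    StrictMono f := by
  induction d generalizing f with
  | zero => exact mem_canonicalMaps_zero.mp hf ▸ strictMono_id
  | succ d ih =>
    obtain ⟨i, -, g, hg, rfl⟩ := hf
    exact (τ.strictMono_piecePos _ i).comp (ih hg)

theorem lt_m_of_mem_canonicalMaps {k d x : ℕ} {f : ℕ → ℕ} (hf : f ∈ τ.canonicalMaps k d)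
    (hx : x < τ.m k) : f x < τ.m (k + d) := by
  induction d generalizing f with
  | zero => exact mem_canonicalMaps_zero.mp hf ▸ hx
  | succ d ih =>
    obtain ⟨i, hi, g, hg, rfl⟩ := hf
    exact τ.piecePos_lt_m_succ hi (ih hg)

theorem canonicalMaps_mono (k : ℕ) : Monotone (τ.canonicalMaps k) :=
  monotone_nat_of_le_succ fun d f hf =>
    ⟨0, by have := τ.two_le_n (k + d); omega, f, hf, by rw [τ.piecePos_zero]; rfl⟩

theorem mem_canonicalMaps_succ_iff {k d : ℕ} {f : ℕ → ℕ} :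
    f ∈ τ.canonicalMaps k (d + 1) ↔
      ∃ g ∈ τ.canonicalMaps (k + 1) d, ∃ i < τ.n (k + 1), f = g ∘ τ.piecePos k i := by
  induction d generalizing f with
  | zero =>
    constructor
    · rintro ⟨i, hi, g, rfl, rfl⟩
      exact ⟨id, rfl, i, hi, rfl⟩
    · rintro ⟨g, rfl, i, hi, rfl⟩
      exact ⟨i, hi, id, rfl, rfl⟩
  | succ d ih =>
    have hk : k + (d + 1) = k + 1 + d := by omega
    constructor
    · rintro ⟨j, hj, f', hf', rfl⟩
      obtain ⟨g, hg, i, hi, rfl⟩ := ih.mp hf'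
      exact ⟨τ.piecePos (k + 1 + d) j ∘ g, ⟨j, hk ▸ hj, g, hg, rfl⟩, i, hi, by rw [hk]; rfl⟩
    · rintro ⟨_, ⟨j, hj, g, hg, rfl⟩, i, hi, rfl⟩
      exact ⟨j, hk ▸ hj, g ∘ τ.piecePos k i, ih.mpr ⟨g, hg, i, hi, rfl⟩, by rw [hk]; rfl⟩

theorem eq_of_mem_canonicalMaps {k d x y : ℕ} {f g : ℕ → ℕ} (hf : f ∈ τ.canonicalMaps k d)
    (hg : g ∈ τ.canonicalMaps k d) (hx : x < τ.m k) (hy : y < τ.m k) (hxy : f x = g y) :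
    x = y ∧ ∀ z ≤ x, f z = g z := by
  induction d generalizing f g with
  | zero =>
    rw [mem_canonicalMaps_zero.mp hf, mem_canonicalMaps_zero.mp hg] at hxy ⊢
    exact ⟨hxy, fun _ _ => rfl⟩
  | succ d ih =>
    obtain ⟨i, hi, f', hf', rfl⟩ := hf
    obtain ⟨j, hj, g', hg', rfl⟩ := hg
    by_cases hij : i = j
    · subst hij
      obtain ⟨rfl, hagree⟩ := ih hf' hg' ((τ.strictMono_piecePos _ i).injective hxy)
      exact ⟨rfl, fun z hz => congrArg (τ.piecePos _ i) (hagree z hz)⟩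
    · obtain ⟨hroot, hfg⟩ := τ.piecePos_eq_piecePos hi hj hij (lt_m_of_mem_canonicalMaps hf' hx)
        (lt_m_of_mem_canonicalMaps hg' hy) hxy
      obtain ⟨rfl, hagree⟩ := ih hf' hg' hfg
      refine ⟨rfl, fun z hz => ?_⟩
      have hz : f' z < τ.r (k + d + 1) :=
        ((strictMono_of_mem_canonicalMaps hf').monotone hz).trans_lt hroot
      simp only [Function.comp_apply, piecePos, ← hagree z ‹_›, if_pos hz]

variable (τ)

def canonicalScheme : Set (Finset Ordinal) :=
  {F | ∃ k d, ∃ f ∈ τ.canonicalMaps k d, F = (range (τ.m k)).image (Nat.cast ∘ f)}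

variable {τ}

theorem card_image_natCast_comp {k d : ℕ} {f : ℕ → ℕ} (hf : f ∈ τ.canonicalMaps k d) :
    ((range (τ.m k)).image (Nat.cast ∘ f : ℕ → Ordinal)).card = τ.m k := by
  rw [card_image_of_injective _ (Nat.cast_injective.comp
    (strictMono_of_mem_canonicalMaps hf).injective), card_range]

theorem mem_level_canonicalScheme {k : ℕ} {F : Finset Ordinal} :
    F ∈ Level τ τ.canonicalScheme k ↔
      ∃ d, ∃ f ∈ τ.canonicalMaps k d, F = (range (τ.m k)).image (Nat.cast ∘ f) := by
  constructor
  · rintro ⟨⟨k', d, f, hf, rfl⟩, hk⟩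
    obtain rfl := τ.strictMono_m.injective ((card_image_natCast_comp hf).symm.trans hk)
    exact ⟨d, f, hf, rfl⟩
  · rintro ⟨d, f, hf, rfl⟩
    exact ⟨⟨k, d, f, hf, rfl⟩, card_image_natCast_comp hf⟩

theorem isInitialSegment_inter_of_mem_canonicalMaps {k d : ℕ} {f g : ℕ → ℕ}
    (hf : f ∈ τ.canonicalMaps k d) (hg : g ∈ τ.canonicalMaps k d) :
    IsInitialSegment ((range (τ.m k)).image (Nat.cast ∘ f) ∩ (range (τ.m k)).image (Nat.cast ∘ g))
      ((range (τ.m k)).image (Nat.cast ∘ f : ℕ → Ordinal)) := by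
  refine ⟨inter_subset_left, fun b hb a ha hba => ?_⟩
  simp only [mem_inter, mem_image, mem_range, Function.comp_apply] at hb ha ⊢
  obtain ⟨z, hz, rfl⟩ := hb
  obtain ⟨⟨x, hx, rfl⟩, y, hy, hyx⟩ := ha
  have hzx : z ≤ x := (strictMono_of_mem_canonicalMaps hf).le_iff_le.mp (Nat.cast_le.mp hba)
  obtain ⟨-, hagree⟩ := eq_of_mem_canonicalMaps hf hg hx hy (Nat.cast_injective hyx.symm)
  exact ⟨⟨z, hz, rfl⟩, z, hz, congrArg Nat.cast (hagree z hzx).symm⟩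

variable (τ)

theorem isConstructionScheme_canonicalScheme :
    IsConstructionScheme τ (Set.Iio ω) τ.canonicalScheme := by
  refine ⟨?_, ?_, ?_, ?_⟩
  · rintro F ⟨k, d, f, hf, rfl⟩
    refine ⟨?_, ?_, k, card_image_natCast_comp hf⟩
    · exact (nonempty_range_iff.mpr (by have := τ.lt_m k; omega)).image _
    · intro a ha
      obtain ⟨x, -, rfl⟩ := mem_image.mp (mem_coe.mp ha)
      exact Ordinal.natCast_lt_omega0 _
  · intro A hA
    obtain ⟨N, hN⟩ := exists_subset_image_natCast_range hA
    exact ⟨_, ⟨N, 0, id, rfl, rfl⟩,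
      hN.trans (image_subset_image (range_subset_range.mpr (τ.lt_m N).le))⟩
  · intro k E hE F hF
    obtain ⟨d, f, hf, rfl⟩ := mem_level_canonicalScheme.mp hE
    obtain ⟨d', g, hg, rfl⟩ := mem_level_canonicalScheme.mp hF
    have hf' := canonicalMaps_mono k (le_max_left d d') hf
    have hg' := canonicalMaps_mono k (le_max_right d d') hg
    refine ⟨(isInitialSegment_inter_of_mem_canonicalMaps hf' hg').mem_of_le, ?_⟩
    rw [inter_comm]
    exact (isInitialSegment_inter_of_mem_canonicalMaps hg' hf').mem_of_le
  · intro k F hF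
    obtain ⟨d, g, hg, rfl⟩ := mem_level_canonicalScheme.mp hF
    have hφ : StrictMono (Nat.cast ∘ g : ℕ → Ordinal) :=
      Nat.strictMono_cast.comp (strictMono_of_mem_canonicalMaps hg)
    have h := (τ.isRootTailTail_piecePos k).image hφ
    refine ⟨_, _, fun i => ?_, h.coe_eq_iUnion, ?_, h.inter_eq, h.root_lt, h.tail_lt⟩
    · rw [image_image]
      exact mem_level_canonicalScheme.mpr
        ⟨d + 1, _, mem_canonicalMaps_succ_iff.mpr ⟨g, hg, i, i.isLt, rfl⟩, rfl⟩
    · rw [card_image_of_injective _ hφ.injective, card_range]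

end SchemeType

theorem IsRootTailTail.eq_image_comp_piecePos {α : Type*} [LinearOrder α] {τ : SchemeType}
    {k : ℕ} {φ : ℕ → α} (hφ : StrictMono φ) {Fi : Fin (τ.n (k + 1)) → Finset α}
    {R : Finset α} (h : IsRootTailTail ((range (τ.m (k + 1))).image φ) Fi R)
    (hFi : ∀ i, (Fi i).card = τ.m k) (hR : R.card = τ.r (k + 1)) (i : Fin (τ.n (k + 1))) :
    Fi i = (range (τ.m k)).image (φ ∘ τ.piecePos k i) := by
  have hcard : ∀ N, ((range N).image φ).card = N := fun N => by
    rw [card_image_of_injective _ hφ.injective, card_range]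
  rw [h.eq_of_card_eq ((τ.isRootTailTail_piecePos k).image hφ) (τ.two_le_n k)
    (by rw [hR, hcard]) fun j => by
      rw [hFi, card_image_of_injective _ hφ.injective,
        card_image_of_injective _ (τ.strictMono_piecePos k j).injective, card_range]]
  exact image_image

namespace IsConstructionScheme

variable {τ : SchemeType} {X : Set Ordinal} {𝓕 𝓖 : Set (Finset Ordinal)}

theorem exists_level (h : IsConstructionScheme τ X 𝓕) {F : Finset Ordinal} (hF : F ∈ 𝓕) :
    ∃ k, F ∈ Level τ 𝓕 k :=
  let ⟨_, _, k, hk⟩ := h.1 F hF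
  ⟨k, hF, hk⟩

theorem exists_isRootTailTail (h : IsConstructionScheme τ X 𝓕) {k : ℕ} {F : Finset Ordinal}
    (hF : F ∈ Level τ 𝓕 (k + 1)) :
    ∃ Fi : Fin (τ.n (k + 1)) → Finset Ordinal, ∃ R : Finset Ordinal,
      (∀ i, Fi i ∈ Level τ 𝓕 k) ∧ R.card = τ.r (k + 1) ∧ IsRootTailTail F Fi R :=
  let ⟨Fi, R, hFi, hU, hR, hI, hroot, htail⟩ := h.2.2.2 k F hF
  ⟨Fi, R, hFi, hR, hU, hI, hroot, htail⟩

theorem level_le_of_subset {k l : ℕ} {E F : Finset Ordinal} (hE : E ∈ Level τ 𝓕 k)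
    (hF : F ∈ Level τ 𝓕 l) (hEF : E ⊆ F) : k ≤ l := by
  rw [← τ.strictMono_m.le_iff_le, ← hE.2, ← hF.2]
  exact card_le_card hEF

theorem isInitialSegment_inter (h : IsConstructionScheme τ X 𝓕) {k l : ℕ} (hkl : k ≤ l)
    {E F : Finset Ordinal} (hE : E ∈ Level τ 𝓕 k) (hF : F ∈ Level τ 𝓕 l) :
    IsInitialSegment (E ∩ F) E := by
  induction l, hkl using Nat.le_induction generalizing F with
  | base => exact ⟨inter_subset_left, (h.2.2.1 k E hE F hF).1⟩
  | succ l _ ih =>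
    refine ⟨inter_subset_left, fun b hb a ha hba => ?_⟩
    obtain ⟨Fi, R, hFi, -, hdec⟩ := h.exists_isRootTailTail hF
    obtain ⟨haE, haF⟩ := mem_inter.mp ha
    obtain ⟨i, hai⟩ := hdec.mem_iff.mp haF
    have hbi := (ih (hFi i)).mem_of_le b hb a (mem_inter.mpr ⟨haE, hai⟩) hba
    exact mem_inter.mpr ⟨hb, hdec.subset i (mem_inter.mp hbi).2⟩

/-- The traces of `E` on the `Fi i` are initial segments of `E`, hence form a chain. -/
theorem exists_subset_of_subset_iUnion (h : IsConstructionScheme τ X 𝓕) {ι : Type*}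
    [Fintype ι] {k l : ℕ} (hkl : k ≤ l) {E : Finset Ordinal} {Fi : ι → Finset Ordinal}
    (hE : E ∈ Level τ 𝓕 k) (hFi : ∀ i, Fi i ∈ Level τ 𝓕 l)
    (hEF : ↑E ⊆ ⋃ i, (↑(Fi i) : Set Ordinal)) :
    ∃ i, E ⊆ Fi i := by
  obtain ⟨e, he⟩ := (h.1 E hE.1).1
  obtain ⟨i₀, -, hmax⟩ := exists_max_image univ (fun i => (E ∩ Fi i).card)
    ⟨(Set.mem_iUnion.mp (hEF he)).choose, mem_univ _⟩
  refine ⟨i₀, fun x hx => ?_⟩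
  obtain ⟨i, hxi⟩ := Set.mem_iUnion.mp (hEF hx)
  have hsub := (h.isInitialSegment_inter hkl hE (hFi i)).subset_of_card_le
    (h.isInitialSegment_inter hkl hE (hFi i₀)) (hmax i (mem_univ i))
  exact (mem_inter.mp (hsub (mem_inter.mpr ⟨hx, hxi⟩))).2

/-- Every member of `𝓖` lies in a member of the cofinal `𝓕 ⊆ 𝓖`, and descending through the
decompositions in `𝓕` reaches it. -/
theorem eq_of_subset (h𝓕 : IsConstructionScheme τ X 𝓕) (h𝓖 : IsConstructionScheme τ X 𝓖)
    (hsub : 𝓕 ⊆ 𝓖) : 𝓖 = 𝓕 := by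
  have hlevel : ∀ {k F}, F ∈ Level τ 𝓕 k → F ∈ Level τ 𝓖 k := fun hF => ⟨hsub hF.1, hF.2⟩
  have hdesc : ∀ l, ∀ H ∈ Level τ 𝓕 l, ∀ k, ∀ G ∈ Level τ 𝓖 k, G ⊆ H → G ∈ 𝓕 := by
    intro l
    induction l using Nat.strong_induction_on with
    | _ l ih =>
      intro H hH k G hG hGH
      rcases (level_le_of_subset hG (hlevel hH) hGH).eq_or_lt with rfl | hkl
      · exact eq_of_subset_of_card_le hGH (by rw [hH.2, hG.2]) ▸ hH.1
      obtain ⟨q, rfl⟩ := Nat.exists_eq_add_one_of_ne_zero (Nat.ne_zero_of_lt hkl)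
      obtain ⟨Fi, R, hFi, -, hdec⟩ := h𝓕.exists_isRootTailTail hH
      obtain ⟨i, hGi⟩ := h𝓖.exists_subset_of_subset_iUnion (Nat.le_of_lt_succ hkl) hG
        (fun i => hlevel (hFi i)) (hdec.coe_eq_iUnion ▸ coe_subset.mpr hGH)
      exact ih q (Nat.lt_add_one q) (Fi i) (hFi i) k G hG hGi
  refine subset_antisymm (fun G hG => ?_) hsub
  obtain ⟨k, hGk⟩ := h𝓖.exists_level hG
  obtain ⟨H, hH, hGH⟩ := h𝓕.2.1 G (h𝓖.1 G hG).2.1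
  obtain ⟨l, hHl⟩ := h𝓕.exists_level hH
  exact hdesc l H hHl k G hGk hGH

theorem image_natCast_range_mem_level (h : IsConstructionScheme τ (Set.Iio ω) 𝓖) (l : ℕ) :
    (range (τ.m l)).image Nat.cast ∈ Level τ 𝓖 l := by
  set C : Finset Ordinal := (range (τ.m l)).image Nat.cast
  have hCcard : C.card = τ.m l := by
    rw [card_image_of_injective _ Nat.cast_injective, card_range]
  have hdesc : ∀ p, ∀ G ∈ Level τ 𝓖 p, C ⊆ G → l ≤ p → C ∈ Level τ 𝓖 l := by
    intro p
    induction p using Nat.strong_induction_on with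
    | _ p ih =>
      intro G hG hCG hl
      rcases hl.eq_or_lt with rfl | hlp
      · exact eq_of_subset_of_card_le hCG (by rw [hG.2, hCcard]) ▸ hG
      obtain ⟨q, rfl⟩ := Nat.exists_eq_add_one_of_ne_zero (Nat.ne_zero_of_lt hlp)
      obtain ⟨Fi, R, hFi, -, hdec⟩ := h.exists_isRootTailTail hG
      let i₀ : Fin (τ.n (q + 1)) := ⟨0, by have := τ.two_le_n q; omega⟩
      have hCF : C ⊆ Fi i₀ :=
        (isInitialSegment_image_natCast_range (h.1 G hG.1).2.1 hCG).subset_of_card_le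
          (hdec.isInitialSegment_zero (τ.two_le_n q))
          (by rw [hCcard, (hFi i₀).2, τ.strictMono_m.le_iff_le]; omega)
      exact ih q (Nat.lt_add_one q) (Fi i₀) (hFi i₀) hCF (by omega)
  obtain ⟨G, hG, hCG⟩ := h.2.1 C fun a ha => by
    obtain ⟨x, -, rfl⟩ := mem_image.mp (mem_coe.mp ha)
    exact Ordinal.natCast_lt_omega0 x
  obtain ⟨p, hGp⟩ := h.exists_level hG
  have hlp : τ.m l ≤ τ.m p := by
    rw [← hCcard, ← hGp.2]
    exact card_le_card hCG
  exact hdesc p G hGp hCG (τ.strictMono_m.le_iff_le.mp hlp)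

theorem canonicalScheme_subset (h : IsConstructionScheme τ (Set.Iio ω) 𝓖) :
    τ.canonicalScheme ⊆ 𝓖 := by
  suffices ∀ d k, ∀ f ∈ τ.canonicalMaps k d, (range (τ.m k)).image (Nat.cast ∘ f) ∈ 𝓖 by
    rintro F ⟨k, d, f, hf, rfl⟩
    exact this d k f hf
  intro d
  induction d with
  | zero =>
    rintro k f rfl
    exact (h.image_natCast_range_mem_level k).1
  | succ d ih =>
    intro k f hf
    obtain ⟨g, hg, i, hi, rfl⟩ := SchemeType.mem_canonicalMaps_succ_iff.mp hf
    have hφ : StrictMono (Nat.cast ∘ g : ℕ → Ordinal) :=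
      Nat.strictMono_cast.comp (SchemeType.strictMono_of_mem_canonicalMaps hg)
    obtain ⟨Fi, R, hFi, hR, hdec⟩ := h.exists_isRootTailTail
      ⟨ih (k + 1) g hg, SchemeType.card_image_natCast_comp hg⟩
    have hchild : Fi ⟨i, hi⟩ = (range (τ.m k)).image (Nat.cast ∘ g ∘ τ.piecePos k i) :=
      hdec.eq_image_comp_piecePos hφ (fun j => (hFi j).2) hR ⟨i, hi⟩
    exact hchild ▸ (hFi ⟨i, hi⟩).1

end IsConstructionScheme

theorem unique_scheme_over_omega_general (τ : SchemeType) :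
    ∃ 𝓕 : Set (Finset Ordinal),
      IsConstructionScheme τ (Set.Iio Ordinal.omega0) 𝓕 ∧
      (∀ 𝓖 : Set (Finset Ordinal),
        IsConstructionScheme τ (Set.Iio Ordinal.omega0) 𝓖 → 𝓖 = 𝓕) ∧
      (∀ k : ℕ, (Finset.range (τ.m k)).image (Nat.cast : ℕ → Ordinal) ∈ 𝓕) :=
  ⟨τ.canonicalScheme, τ.isConstructionScheme_canonicalScheme,
    fun _ h𝓖 =>
      (τ.isConstructionScheme_canonicalScheme).eq_of_subset h𝓖 h𝓖.canonicalScheme_subset,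
    fun k => ⟨k, 0, id, rfl, rfl⟩⟩

/-- For every good type there is exactly one construction scheme over `ω`, and it
contains every initial segment `m_k` of `ω`. -/
theorem unique_scheme_over_omega (τ : SchemeType) (hτ : GoodType τ) :
    ∃ 𝓕 : Set (Finset Ordinal),
      IsConstructionScheme τ (Set.Iio Ordinal.omega0) 𝓕 ∧
      (∀ 𝓖 : Set (Finset Ordinal),
        IsConstructionScheme τ (Set.Iio Ordinal.omega0) 𝓖 → 𝓖 = 𝓕) ∧
      (∀ k : ℕ, (Finset.range (τ.m k)).image (Nat.cast : ℕ → Ordinal) ∈ 𝓕) :=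
  unique_scheme_over_omega_general τ
end

section
/- Let (L_α, R_α)_{α<ω₁} be a pregap on ω with L_α ∩ R_α = ∅ for all α. Then (L_α, R_α)_{α<ω₁} is a gap if and only if for every uncountable S ⊆ ω₁ there exist α < β in S such that (L_α ∩ R_β) ∪ (L_β ∩ R_α) ≠ ∅. -/
noncomputable def omega1 : Ordinal := (Cardinal.aleph 1).ord

lemma countable_Iio_of_lt_omega1 {γ : Ordinal} (h : γ < omega1) : (Set.Iio γ).Countable := by
  rw [Cardinal.countable_iff_lt_aleph_one, Ordinal.mk_Iio_ordinal, Cardinal.lift_lt_aleph_one]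
  exact Cardinal.lt_ord.mp h

lemma not_countable_Iio_omega1 : ¬ (Set.Iio omega1).Countable := by
  rw [Cardinal.countable_iff_lt_aleph_one, Ordinal.mk_Iio_ordinal]
  simp only [omega1, Cardinal.card_ord, Cardinal.lift_lt_aleph_one]
  exact lt_irrefl _

lemma unbounded_of_uncountable {S : Set Ordinal} (hS : S ⊆ Set.Iio omega1)
    (hunc : ¬ S.Countable) : ∀ γ < omega1, ∃ α ∈ S, γ < α := by
  intro γ hγ
  by_contra hcon
  push_neg at hcon
  apply hunc
  have hsucc : γ + 1 < omega1 := by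
    have hlim : Order.IsSuccLimit (Cardinal.aleph 1).ord :=
      Cardinal.isSuccLimit_ord (le_of_lt Cardinal.aleph0_lt_aleph_one)
    rw [Ordinal.add_one_eq_succ]; exact hlim.succ_lt hγ
  refine (countable_Iio_of_lt_omega1 hsucc).mono (fun α hα => ?_)
  have := hcon α hα
  exact lt_of_le_of_lt this (by rw [Ordinal.add_one_eq_succ]; exact Order.lt_succ γ)

lemma exists_uncountable_fiber {β : Type} [Countable β] {S : Set Ordinal} (hS : ¬ S.Countable)
    (f : Ordinal → β) : ∃ b, ¬ (S ∩ f ⁻¹' {b}).Countable := by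
  by_contra h
  push_neg at h
  apply hS
  have hsub : S ⊆ ⋃ b, (S ∩ f ⁻¹' {b}) := fun α hα => Set.mem_iUnion.mpr ⟨f α, hα, rfl⟩
  exact (Set.countable_iUnion h).mono hsub

/-- Kunen's lemma: an `(ω₁,ω₁)`-pregap `(L_α, R_α)` with `L_α ∩ R_α = ∅` is a gap iff
every uncountable `S ⊆ ω₁` contains `α < β` with `(L_α ∩ R_β) ∪ (L_β ∩ R_α) ≠ ∅`. -/
theorem gap_iff_unseparated_pairs (L R : Ordinal → Set ℕ)
    (hLinf : ∀ α < omega1, (L α).Infinite)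
    (hRinf : ∀ α < omega1, (R α).Infinite)
    (hLmono : ∀ α β : Ordinal, α < β → β < omega1 → (L α \ L β).Finite)
    (hRmono : ∀ α β : Ordinal, α < β → β < omega1 → (R α \ R β).Finite)
    (horth : ∀ α < omega1, ∀ β < omega1, (L α ∩ R β).Finite)
    (hdisj : ∀ α < omega1, L α ∩ R α = ∅) :
    (¬ ∃ C : Set ℕ, ∀ α < omega1, (L α \ C).Finite ∧ (C ∩ R α).Finite) ↔
      (∀ S : Set Ordinal, S ⊆ Set.Iio omega1 → ¬ S.Countable →
        ∃ α ∈ S, ∃ β ∈ S, α < β ∧ ((L α ∩ R β) ∪ (L β ∩ R α)).Nonempty) := by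
  constructor
  · -- gap → every uncountable S has an unseparated pair
    intro hgap S hSsub hSunc
    by_contra hno
    push_neg at hno
    -- all pairwise intersections vanish
    have hLR : ∀ α ∈ S, ∀ β ∈ S, L α ∩ R β = ∅ := by
      intro α hα β hβ
      rcases lt_trichotomy α β with h | h | h
      · exact (Set.union_empty_iff.mp (hno α hα β hβ h)).1
      · subst h; exact hdisj α (hSsub hα)
      · exact (Set.union_empty_iff.mp (hno β hβ α hα h)).2
    set C : Set ℕ := ⋃ α ∈ S, L α with hCdef
    have hCR : ∀ α ∈ S, C ∩ R α = ∅ := by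
      intro α hα
      ext m
      simp only [Set.mem_inter_iff, Set.mem_empty_iff_false, iff_false, not_and, hCdef,
        Set.mem_iUnion]
      rintro ⟨β, hβ, hmβ⟩ hmR
      have h0 : m ∈ L β ∩ R α := ⟨hmβ, hmR⟩
      rw [hLR β hβ α hα] at h0
      exact h0
    apply hgap
    refine ⟨C, fun γ hγ => ?_⟩
    obtain ⟨α, hαS, hγα⟩ := unbounded_of_uncountable hSsub hSunc γ hγ
    have hαlt : α < omega1 := hSsub hαS
    constructor
    · refine (hLmono γ α hγα hαlt).subset (fun m hm => ?_)
      refine ⟨hm.1, fun hmα => hm.2 ?_⟩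
      exact Set.mem_biUnion hαS hmα
    · refine (hRmono γ α hγα hαlt).subset (fun m hm => ?_)
      refine ⟨hm.2, fun hmα => ?_⟩
      have h0 : m ∈ C ∩ R α := ⟨hm.1, hmα⟩
      rw [hCR α hαS] at h0
      exact h0
  · -- unseparated pairs → gap
    rintro hRHS ⟨C, hC⟩
    have key : ∀ α : Ordinal, ∃ n : ℕ, ∃ s : Finset ℕ, α < omega1 →
        (∀ m ∈ L α \ C, m < n) ∧ (∀ m ∈ C ∩ R α, m < n) ∧ ↑s = L α ∩ Set.Iio n := by
      intro α
      by_cases h : α < omega1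
      · obtain ⟨h1, h2⟩ := hC α h
        obtain ⟨n, hn⟩ := (h1.union h2).bddAbove
        refine ⟨n + 1, ((Set.finite_Iio (n + 1)).inter_of_right (L α)).toFinset, fun _ => ?_⟩
        refine ⟨fun m hm => ?_, fun m hm => ?_, ?_⟩
        · exact Nat.lt_succ_of_le (hn (Set.mem_union_left _ hm))
        · exact Nat.lt_succ_of_le (hn (Set.mem_union_right _ hm))
        · simp [Set.Finite.coe_toFinset]
      · exact ⟨0, ∅, fun h' => absurd h' h⟩
    choose n s hns using key
    obtain ⟨⟨n₀, s₀⟩, hfib⟩ := exists_uncountable_fiber not_countable_Iio_omega1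
      (fun α => ((n α, s α) : ℕ × Finset ℕ))
    set S₀ : Set Ordinal := Set.Iio omega1 ∩ (fun α => ((n α, s α) : ℕ × Finset ℕ)) ⁻¹' {(n₀, s₀)}
      with hS₀def
    obtain ⟨α, hαS, β, hβS, hαβ, m, hm⟩ :=
      hRHS S₀ (fun x hx => hx.1) hfib
    have hαlt : α < omega1 := hαS.1
    have hβlt : β < omega1 := hβS.1
    have hfα : n α = n₀ ∧ s α = s₀ := by
      have := hαS.2; simp only [Set.mem_preimage, Set.mem_singleton_iff, Prod.mk.injEq] at this
      exact this
    have hfβ : n β = n₀ ∧ s β = s₀ := by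
      have := hβS.2; simp only [Set.mem_preimage, Set.mem_singleton_iff, Prod.mk.injEq] at this
      exact this
    obtain ⟨hα1, hα2, hα3⟩ := hns α hαlt
    obtain ⟨hβ1, hβ2, hβ3⟩ := hns β hβlt
    rw [hfα.1] at hα1 hα2 hα3
    rw [hfβ.1] at hβ1 hβ2 hβ3
    have hLL : L α ∩ Set.Iio n₀ = L β ∩ Set.Iio n₀ := by
      rw [← hα3, ← hβ3, hfα.2, hfβ.2]
    rcases hm with ⟨hmL, hmR⟩ | ⟨hmL, hmR⟩
    · -- m ∈ L α ∩ R β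
      by_cases hmn : m < n₀
      · have : m ∈ L β ∩ Set.Iio n₀ := hLL ▸ (⟨hmL, hmn⟩ : m ∈ L α ∩ Set.Iio n₀)
        have h0 : m ∈ L β ∩ R β := ⟨this.1, hmR⟩
        rw [hdisj β hβlt] at h0
        exact h0
      · by_cases hmC : m ∈ C
        · exact hmn (hβ2 m ⟨hmC, hmR⟩)
        · exact hmn (hα1 m ⟨hmL, hmC⟩)
    · -- m ∈ L β ∩ R α
      by_cases hmn : m < n₀
      · have : m ∈ L α ∩ Set.Iio n₀ := hLL ▸ (⟨hmL, hmn⟩ : m ∈ L β ∩ Set.Iio n₀)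
        have h0 : m ∈ L α ∩ R α := ⟨this.1, hmR⟩
        rw [hdisj α hαlt] at h0
        exact h0
      · by_cases hmC : m ∈ C
        · exact hmn (hα2 m ⟨hmC, hmR⟩)
        · exact hmn (hβ1 m ⟨hmL, hmC⟩)
end

section
/- Every directed partial order D of cardinality ω₁ is Tukey equivalent to 1, to ω, to ω₁, or satisfies ω×ω₁ ≤_T D ≤_T [ω₁]^{<ω}. -/
/-!
Tukey reductions are built from connections: maps `g : β → γ` and `ψ : γ → β` with
`g b ≤ d → b ≤ ψ d`. Then `ψ` is a Tukey map, and conversely every Tukey map `ψ` admits such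
a `g`, so two reductions into a directed set combine into one from the product.

Fix a bijection `e : D ≃ ω₁`. If `D` has a greatest element, `D ≡_T 1`; if it has a countable
cofinal set, a monotone cofinal sequence gives `D ≡_T ω`. Otherwise no countable set is
cofinal, and since proper initial segments of `ω₁` are countable, `e` is a Tukey map, so
`ω₁ ≤_T D`. If all countable sets are bounded, bounding the countable sets `e⁻¹[0, α]` gives
`D ≤_T ω₁`. If not, a countable unbounded set is dominated by a monotone unbounded sequence,
so `ω ≤_T D` and hence `ω × ω₁ ≤_T D`; and `d ↦ {e d}` together with upper bounds of finite
sets shows `D ≤_T [ω₁]^{<ω}`.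
-/

/-- `S` is cofinal in a preordered type. -/
def IsCofinalIn {γ : Type*} [Preorder γ] (S : Set γ) : Prop :=
  ∀ x : γ, ∃ y ∈ S, x ≤ y

/-- `TukeyLE β γ` means `β ≤_T γ`: some `φ : γ → β` maps cofinal sets to cofinal
sets. -/
def TukeyLE (β γ : Type*) [Preorder β] [Preorder γ] : Prop :=
  ∃ φ : γ → β, ∀ S : Set γ, IsCofinalIn S → IsCofinalIn (φ '' S)

/-- Tukey equivalence. -/
def TukeyEquiv (β γ : Type*) [Preorder β] [Preorder γ] : Prop :=
  TukeyLE β γ ∧ TukeyLE γ β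

/-- The ordinal `ω₁` as an ordered type. -/
abbrev Omega1Type : Type 1 := {o : Ordinal // o < (Cardinal.aleph 1).ord}

open Cardinal Set Function

section Tukey

variable {β γ : Type*} [Preorder β] [Preorder γ]

theorem tukeyLE_of_connection (g : β → γ) (ψ : γ → β) (h : ∀ b d, g b ≤ d → b ≤ ψ d) :
    TukeyLE β γ :=
  ⟨ψ, fun _ hS b =>
    let ⟨d, hdS, hd⟩ := hS (g b)
    ⟨ψ d, mem_image_of_mem ψ hdS, h b d hd⟩⟩

theorem TukeyLE.exists_connection (h : TukeyLE β γ) :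
    ∃ (g : β → γ) (ψ : γ → β), ∀ b d, g b ≤ d → b ≤ ψ d := by
  obtain ⟨ψ, hψ⟩ := h
  -- `{d | ¬ b ≤ ψ d}` is not cofinal, since its image under `ψ` has nothing above `b`.
  have : ∀ b, ∃ c, ∀ d, c ≤ d → b ≤ ψ d := by
    intro b
    by_contra! hb
    obtain ⟨_, ⟨d, hd, rfl⟩, hbd⟩ :=
      hψ {d | ¬ b ≤ ψ d} (fun c => let ⟨d, hcd, hd⟩ := hb c; ⟨d, hd, hcd⟩) b
    exact hd hbd
  choose g hg using this
  exact ⟨g, ψ, hg⟩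

theorem TukeyLE.prod {β' : Type*} [Preorder β'] [IsDirectedOrder γ] (h : TukeyLE β γ)
    (h' : TukeyLE β' γ) : TukeyLE (β × β') γ := by
  obtain ⟨g, ψ, hg⟩ := h.exists_connection
  obtain ⟨g', ψ', hg'⟩ := h'.exists_connection
  choose u hu hu' using fun p : β × β' => exists_ge_ge (g p.1) (g' p.2)
  exact tukeyLE_of_connection u (fun d => (ψ d, ψ' d)) fun p d hd =>
    ⟨hg _ _ ((hu p).trans hd), hg' _ _ ((hu' p).trans hd)⟩

theorem tukeyEquiv_punit_of_isTop {t : γ} (ht : IsTop t) : TukeyEquiv γ PUnit :=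
  ⟨tukeyLE_of_connection (fun _ => PUnit.unit) (fun _ => t) fun d _ _ => ht d,
    tukeyLE_of_connection (fun _ => t) (fun _ => PUnit.unit) fun _ _ _ => le_rfl⟩

theorem tukeyLE_finset_of_injective [Nonempty γ] [IsDirectedOrder γ] {α : Type*} {e : γ → α}
    (he : Injective e) : TukeyLE γ (Finset α) := by
  choose ψ hψ using fun F : Finset α => (F.preimage e he.injOn).exists_le
  exact tukeyLE_of_connection (fun d => {e d}) ψ fun d F hd =>
    hψ F d (Finset.mem_preimage.2 (Finset.singleton_subset_iff.1 hd))

end Tukey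

section Sequences

variable {γ : Type*} [Preorder γ]

theorem exists_monotone_seq_ge [IsDirectedOrder γ] (u : ℕ → γ) :
    ∃ x : ℕ → γ, Monotone x ∧ ∀ n, u n ≤ x n := by
  choose sup le_sup_left le_sup_right using exists_ge_ge (α := γ)
  let x : ℕ → γ := fun n => Nat.rec (u 0) (fun n xn => sup xn (u (n + 1))) n
  refine ⟨x, monotone_nat_of_le_succ fun n => le_sup_left _ _, ?_⟩
  rintro (_ | n)
  exacts [le_rfl, le_sup_right _ _]

theorem Set.Countable.exists_monotone_seq_ge [Nonempty γ] [IsDirectedOrder γ] {A : Set γ}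
    (hA : A.Countable) : ∃ x : ℕ → γ, Monotone x ∧ ∀ a ∈ A, ∃ n, a ≤ x n := by
  obtain ⟨u, hu⟩ := countable_iff_exists_subset_range.mp hA
  obtain ⟨x, hx, hux⟩ := _root_.exists_monotone_seq_ge u
  refine ⟨x, hx, fun a ha => ?_⟩
  obtain ⟨n, rfl⟩ := hu ha
  exact ⟨n, hux n⟩

theorem tukeyLE_nat_of_monotone_of_cofinal {x : ℕ → γ} (hx : Monotone x)
    (hcof : IsCofinalIn (range x)) : TukeyLE γ ℕ := by
  have : ∀ d, ∃ n, d ≤ x n := fun d => let ⟨_, ⟨n, rfl⟩, hd⟩ := hcof d; ⟨n, hd⟩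
  choose n hn using this
  exact tukeyLE_of_connection n x fun d m hd => (hn d).trans (hx hd)

theorem tukeyLE_nat_of_monotone_of_not_bddAbove {x : ℕ → γ} (hx : Monotone x)
    (hunb : ¬BddAbove (range x)) : TukeyLE ℕ γ := by
  classical
  have hnot_le : ∀ d, ∃ n, ¬x n ≤ d := fun d =>
    let ⟨_, ⟨n, rfl⟩, hn⟩ := not_bddAbove_iff'.1 hunb d; ⟨n, hn⟩
  refine tukeyLE_of_connection x (fun d => Nat.find (hnot_le d)) fun n d hnd => ?_
  by_contra! hlt
  exact Nat.find_spec (hnot_le d) ((hx hlt.le).trans hnd)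

variable [Nonempty γ] [IsDirectedOrder γ]

theorem tukeyEquiv_nat_of_countable_cofinal {C : Set γ} (hC : C.Countable)
    (hcof : IsCofinalIn C) (hnotop : ∀ t : γ, ¬IsTop t) : TukeyEquiv γ ℕ := by
  obtain ⟨x, hx, hCx⟩ := hC.exists_monotone_seq_ge
  have hxcof : IsCofinalIn (range x) := fun d =>
    let ⟨c, hc, hdc⟩ := hcof d
    let ⟨n, hcn⟩ := hCx c hc
    ⟨x n, mem_range_self n, hdc.trans hcn⟩
  refine ⟨tukeyLE_nat_of_monotone_of_cofinal hx hxcof,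
    tukeyLE_nat_of_monotone_of_not_bddAbove hx ?_⟩
  rintro ⟨t, ht⟩
  exact hnotop t fun d => let ⟨_, ⟨n, rfl⟩, hd⟩ := hxcof d; hd.trans (ht (mem_range_self n))

theorem tukeyLE_nat_of_countable_not_bddAbove {A : Set γ} (hA : A.Countable)
    (hunb : ¬BddAbove A) : TukeyLE ℕ γ := by
  obtain ⟨x, hx, hAx⟩ := hA.exists_monotone_seq_ge
  refine tukeyLE_nat_of_monotone_of_not_bddAbove hx fun ⟨t, ht⟩ => hunb ⟨t, fun a ha => ?_⟩
  obtain ⟨n, han⟩ := hAx a ha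
  exact han.trans (ht (mem_range_self n))

end Sequences

section Omega1

theorem mk_omega1Type : #Omega1Type = ℵ₁ := by
  change #(Iio (ord ℵ₁)) = ℵ₁
  rw [mk_Iio_ordinal, card_ord, lift_aleph, Ordinal.lift_one]

theorem Omega1Type.countable_Iio (α : Omega1Type) : (Iio α).Countable := by
  have : (Iio α.val).Countable := by
    rw [← le_aleph0_iff_set_countable, mk_Iio_ordinal, lift_le_aleph0, ← lt_aleph_one_iff,
      ← lt_ord]
    exact α.2
  exact this.preimage Subtype.val_injective

theorem Omega1Type.countable_Iic (α : Omega1Type) : (Iic α).Countable := by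
  rw [← Iio_insert]
  exact (countable_Iio α).insert α

variable {γ : Type*} [Preorder γ] {e : γ → Omega1Type}

theorem tukeyLE_omega1_of_not_countable_cofinal (he : Injective e)
    (h : ∀ C : Set γ, C.Countable → ¬IsCofinalIn C) : TukeyLE Omega1Type γ := by
  have : ∀ α, ∃ c, ∀ d, c ≤ d → α ≤ e d := by
    intro α
    by_contra! hα
    exact h (e ⁻¹' Iio α) ((Omega1Type.countable_Iio α).preimage he)
      fun c => let ⟨d, hcd, hd⟩ := hα c; ⟨d, hd, hcd⟩
  choose g hg using this
  exact tukeyLE_of_connection g e hg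

theorem tukeyLE_omega1_of_countable_bddAbove (he : Injective e)
    (h : ∀ A : Set γ, A.Countable → BddAbove A) : TukeyLE γ Omega1Type := by
  choose ψ hψ using fun α => h (e ⁻¹' Iic α) ((Omega1Type.countable_Iic α).preimage he)
  exact tukeyLE_of_connection e ψ fun d α hd => hψ α hd

end Omega1

/-- Every directed partial order of cardinality `ω₁` is Tukey equivalent to `1`, `ω`,
`ω₁`, or lies Tukey between `ω × ω₁` and `[ω₁]^{<ω}`. -/
theorem tukey_classification_omega1 (D : Type*) [PartialOrder D]
    (hdir : ∀ x y : D, ∃ z : D, x ≤ z ∧ y ≤ z)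
    (hcard : Cardinal.mk D = Cardinal.aleph 1) :
    TukeyEquiv D PUnit ∨ TukeyEquiv D ℕ ∨ TukeyEquiv D Omega1Type ∨
      (TukeyLE (ℕ × Omega1Type) D ∧ TukeyLE D (Finset Omega1Type)) := by
  have : IsDirectedOrder D := ⟨hdir⟩
  have : Nonempty D := mk_ne_zero_iff.mp (hcard ▸ (aleph_pos 1).ne')
  obtain ⟨e⟩ : Nonempty (D ≃ Omega1Type) := by
    rw [← lift_mk_eq', hcard, mk_omega1Type, lift_aleph, lift_aleph, Ordinal.lift_one,
      Ordinal.lift_one]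
  by_cases htop : ∃ t : D, IsTop t
  · exact Or.inl (tukeyEquiv_punit_of_isTop htop.choose_spec)
  push Not at htop
  by_cases hcof : ∃ C : Set D, C.Countable ∧ IsCofinalIn C
  · obtain ⟨C, hC, hCcof⟩ := hcof
    exact Or.inr (Or.inl (tukeyEquiv_nat_of_countable_cofinal hC hCcof htop))
  push Not at hcof
  have hω₁ : TukeyLE Omega1Type D := tukeyLE_omega1_of_not_countable_cofinal e.injective hcof
  by_cases hbdd : ∀ A : Set D, A.Countable → BddAbove A
  · exact Or.inr (Or.inr (Or.inl
      ⟨tukeyLE_omega1_of_countable_bddAbove e.injective hbdd, hω₁⟩))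
  push Not at hbdd
  obtain ⟨A, hA, hAunb⟩ := hbdd
  exact Or.inr (Or.inr (Or.inr
    ⟨(tukeyLE_nat_of_countable_not_bddAbove hA hAunb).prod hω₁,
      tukeyLE_finset_of_injective e.injective⟩))
end
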